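/- arXiv:2302.05770 — 5 statements merged into one kernel-verified Lean document; each statement's English description precedes it below -/
import Mathlib

section
/- Let n ≥ 7 be an integer and let v : I → ℝ be a C⁶ function on an open interval I ⊆ ℝ solving the radial cylindrical Emden–Fowler ODE −v⁽⁶⁾ + K₄v⁽⁴⁾ − K₂v″ + K₀v = c_n v^{(n+6)/(n−6)} on I (with v > 0). Then the radial Hamiltonian H(v)(t) = ½(v‴(t))² + (K₄/2)(v″(t))² + (K₂/2)(v′(t))² − (K₀/2)v(t)² + v⁽⁵⁾(t)v′(t) − v⁽⁴⁾(t)v″(t) − K₄v‴(t)v′(t) + (c_n(n−6)/(2n))|v(t)|^{2n/(n−6)} is constant on I. -/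
open Real Set Filter

/-- `c_n = n(n−2)(n+2)(n−4)(n+4)(n−6)/64`. -/
noncomputable def cQ (n : ℕ) : ℝ :=
  (n : ℝ) * ((n:ℝ) - 2) * ((n:ℝ) + 2) * ((n:ℝ) - 4) * ((n:ℝ) + 4) * ((n:ℝ) - 6) / 64

/-- `K₀ = (n−6)²(n−2)²(n+2)²/64`. -/
noncomputable def K0c (n : ℕ) : ℝ := ((n:ℝ) - 6) ^ 2 * ((n:ℝ) - 2) ^ 2 * ((n:ℝ) + 2) ^ 2 / 64

/-- `K₂ = (3n⁴−24n³+72n²−96n+304)/16`. -/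
noncomputable def K2c (n : ℕ) : ℝ :=
  (3 * (n:ℝ) ^ 4 - 24 * (n:ℝ) ^ 3 + 72 * (n:ℝ) ^ 2 - 96 * (n:ℝ) + 304) / 16

/-- `K₄ = (3n²−12n+44)/4`. -/
noncomputable def K4c (n : ℕ) : ℝ := (3 * (n:ℝ) ^ 2 - 12 * (n:ℝ) + 44) / 4

/-- The rescaled radial cylindrical Emden–Fowler ODE
`−v⁽⁶⁾ + K₄v⁽⁴⁾ − K₂v″ + K₀v = A v^((n+6)/(n−6))` at a point `t`. -/
def EmdenFowler (n : ℕ) (A : ℝ) (v : ℝ → ℝ) (t : ℝ) : Prop :=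
  -(iteratedDeriv 6 v t) + K4c n * iteratedDeriv 4 v t - K2c n * iteratedDeriv 2 v t
    + K0c n * v t = A * v t ^ (((n:ℝ) + 6) / ((n:ℝ) - 6))

/-- The radial Hamiltonian
`H(v)(t) = ½(v‴)² + (K₄/2)(v″)² + (K₂/2)(v′)² − (K₀/2)v² + v⁽⁵⁾v′ − v⁽⁴⁾v″ − K₄v‴v′
  + ((n−6)A/(2n))|v|^(2n/(n−6))` (for stmt 0 take `A = c_n`). -/
noncomputable def Ham (n : ℕ) (A : ℝ) (v : ℝ → ℝ) (t : ℝ) : ℝ :=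
  (1/2) * (iteratedDeriv 3 v t) ^ 2 + (K4c n / 2) * (iteratedDeriv 2 v t) ^ 2
    + (K2c n / 2) * (deriv v t) ^ 2 - (K0c n / 2) * (v t) ^ 2
    + iteratedDeriv 5 v t * deriv v t - iteratedDeriv 4 v t * iteratedDeriv 2 v t
    - K4c n * iteratedDeriv 3 v t * deriv v t
    + ((n:ℝ) - 6) * A / (2 * (n:ℝ)) * |v t| ^ (2 * (n:ℝ) / ((n:ℝ) - 6))

/-- on an open interval `I`, the radial Hamiltonian of a positive `C⁶` solution of
the radial cylindrical Emden–Fowler ODE `−v⁽⁶⁾ + K₄v⁽⁴⁾ − K₂v″ + K₀v = c_n v^((n+6)/(n−6))`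
is constant. -/
theorem hamiltonian_constant (n : ℕ) (hn : 7 ≤ n) (I : Set ℝ) (hIopen : IsOpen I)
    (hIinterval : I.OrdConnected) (v : ℝ → ℝ) (hv : ContDiffOn ℝ 6 v I)
    (hpos : ∀ t ∈ I, 0 < v t) (hode : ∀ t ∈ I, EmdenFowler n (cQ n) v t) :
    ∀ s ∈ I, ∀ t ∈ I, Ham n (cQ n) v s = Ham n (cQ n) v t := by
  have hn7 : (7:ℝ) ≤ (n:ℝ) := by exact_mod_cast hn
  have hn0 : (n:ℝ) ≠ 0 := by linarith
  have h6 : (n:ℝ) - 6 ≠ 0 := by linarith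
  -- iterated derivatives are ContDiffOn
  have c1 : ContDiffOn ℝ 5 (iteratedDeriv 1 v) I := by
    rw [iteratedDeriv_one]; exact hv.deriv_of_isOpen hIopen (by norm_num)
  have c2 : ContDiffOn ℝ 4 (iteratedDeriv 2 v) I := by
    rw [iteratedDeriv_succ]; exact c1.deriv_of_isOpen hIopen (by norm_num)
  have c3 : ContDiffOn ℝ 3 (iteratedDeriv 3 v) I := by
    rw [iteratedDeriv_succ]; exact c2.deriv_of_isOpen hIopen (by norm_num)
  have c4 : ContDiffOn ℝ 2 (iteratedDeriv 4 v) I := by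
    rw [iteratedDeriv_succ]; exact c3.deriv_of_isOpen hIopen (by norm_num)
  have c5 : ContDiffOn ℝ 1 (iteratedDeriv 5 v) I := by
    rw [iteratedDeriv_succ]; exact c4.deriv_of_isOpen hIopen (by norm_num)
  have hder : ∀ k : ℕ, ContDiffOn ℝ 1 (iteratedDeriv k v) I →
      ∀ x ∈ I, HasDerivAt (iteratedDeriv k v) (iteratedDeriv (k+1) v x) x := by
    intro k hk x hx
    have h := ((hk.differentiableOn (by norm_num)).differentiableAt (hIopen.mem_nhds hx)).hasDerivAt
    rw [iteratedDeriv_succ]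
    exact h
  have key : ∀ x ∈ I, HasDerivAt (Ham n (cQ n) v) 0 x := by
    intro x hx
    have hx0 : (0:ℝ) < v x := hpos x hx
    have Dv : HasDerivAt v (deriv v x) x := by
      have h := hder 0 (by simpa [iteratedDeriv_zero] using hv.of_le (by norm_num)) x hx
      simpa [iteratedDeriv_zero, iteratedDeriv_one] using h
    have D1 : HasDerivAt (deriv v) (iteratedDeriv 2 v x) x := by
      have h := hder 1 (c1.of_le (by norm_num)) x hx
      rwa [iteratedDeriv_one] at h
    have D2 : HasDerivAt (iteratedDeriv 2 v) (iteratedDeriv 3 v x) x :=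
      hder 2 (c2.of_le (by norm_num)) x hx
    have D3 : HasDerivAt (iteratedDeriv 3 v) (iteratedDeriv 4 v x) x :=
      hder 3 (c3.of_le (by norm_num)) x hx
    have D4 : HasDerivAt (iteratedDeriv 4 v) (iteratedDeriv 5 v x) x :=
      hder 4 (c4.of_le (by norm_num)) x hx
    have D5 : HasDerivAt (iteratedDeriv 5 v) (iteratedDeriv 6 v x) x :=
      hder 5 c5 x hx
    -- the rpow term
    have hp1 : 2 * (n:ℝ) / ((n:ℝ) - 6) - 1 = ((n:ℝ) + 6) / ((n:ℝ) - 6) := by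
      field_simp; ring
    have Dr : HasDerivAt (fun t => |v t| ^ (2 * (n:ℝ) / ((n:ℝ) - 6)))
        (deriv v x * (2 * (n:ℝ) / ((n:ℝ) - 6)) * v x ^ (((n:ℝ) + 6) / ((n:ℝ) - 6))) x := by
      have h := Dv.rpow_const (p := 2 * (n:ℝ) / ((n:ℝ) - 6)) (Or.inl hx0.ne')
      rw [hp1] at h
      apply h.congr_of_eventuallyEq
      filter_upwards [hIopen.mem_nhds hx] with y hy
      rw [abs_of_pos (hpos y hy)]
    -- assemble the derivative of Ham
    have T1 : HasDerivAt (fun t => (1/2 : ℝ) * (iteratedDeriv 3 v t) ^ 2)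
        (iteratedDeriv 3 v x * iteratedDeriv 4 v x) x := by
      have h := (D3.pow 2).const_mul (1/2 : ℝ)
      refine h.congr_deriv ?_; simp; ring
    have T2 : HasDerivAt (fun t => (K4c n / 2) * (iteratedDeriv 2 v t) ^ 2)
        (K4c n * (iteratedDeriv 2 v x * iteratedDeriv 3 v x)) x := by
      have h := (D2.pow 2).const_mul (K4c n / 2)
      refine h.congr_deriv ?_; simp; ring
    have T3 : HasDerivAt (fun t => (K2c n / 2) * (deriv v t) ^ 2)
        (K2c n * (deriv v x * iteratedDeriv 2 v x)) x := by
      have h := (D1.pow 2).const_mul (K2c n / 2)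
      refine h.congr_deriv ?_; simp; ring
    have T4 : HasDerivAt (fun t => (K0c n / 2) * (v t) ^ 2)
        (K0c n * (v x * deriv v x)) x := by
      have h := (Dv.pow 2).const_mul (K0c n / 2)
      refine h.congr_deriv ?_; simp; ring
    have T5 : HasDerivAt (fun t => iteratedDeriv 5 v t * deriv v t)
        (iteratedDeriv 6 v x * deriv v x + iteratedDeriv 5 v x * iteratedDeriv 2 v x) x :=
      D5.mul D1
    have T6 : HasDerivAt (fun t => iteratedDeriv 4 v t * iteratedDeriv 2 v t)
        (iteratedDeriv 5 v x * iteratedDeriv 2 v x + iteratedDeriv 4 v x * iteratedDeriv 3 v x)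
        x := D4.mul D2
    have T7 : HasDerivAt (fun t => K4c n * iteratedDeriv 3 v t * deriv v t)
        (K4c n * iteratedDeriv 4 v x * deriv v x
          + K4c n * iteratedDeriv 3 v x * iteratedDeriv 2 v x) x :=
      (D3.const_mul (K4c n)).mul D1
    have T8 : HasDerivAt
        (fun t => ((n:ℝ) - 6) * cQ n / (2 * (n:ℝ)) * |v t| ^ (2 * (n:ℝ) / ((n:ℝ) - 6)))
        (cQ n * v x ^ (((n:ℝ) + 6) / ((n:ℝ) - 6)) * deriv v x) x := by
      have h := Dr.const_mul (((n:ℝ) - 6) * cQ n / (2 * (n:ℝ)))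
      refine h.congr_deriv ?_
      field_simp
    have Htot := ((((((T1.add T2).add T3).sub T4).add T5).sub T6).sub T7).add T8
    have ho := hode x hx
    unfold EmdenFowler at ho
    have hS : iteratedDeriv 3 v x * iteratedDeriv 4 v x
        + K4c n * (iteratedDeriv 2 v x * iteratedDeriv 3 v x)
        + K2c n * (deriv v x * iteratedDeriv 2 v x)
        - K0c n * (v x * deriv v x)
        + (iteratedDeriv 6 v x * deriv v x + iteratedDeriv 5 v x * iteratedDeriv 2 v x)
        - (iteratedDeriv 5 v x * iteratedDeriv 2 v x
            + iteratedDeriv 4 v x * iteratedDeriv 3 v x)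
        - (K4c n * iteratedDeriv 4 v x * deriv v x
            + K4c n * iteratedDeriv 3 v x * iteratedDeriv 2 v x)
        + cQ n * v x ^ (((n:ℝ) + 6) / ((n:ℝ) - 6)) * deriv v x = 0 := by
      linear_combination - deriv v x * ho
    rw [hS] at Htot
    exact Htot
  intro s hs t ht
  have hconv : Convex ℝ I := convex_iff_ordConnected.mpr hIinterval
  refine hconv.is_const_of_fderivWithin_eq_zero
    (fun x hx => ((key x hx).differentiableAt).differentiableWithinAt) (fun x hx => ?_) hs ht
  rw [fderivWithin_of_isOpen hIopen hx, (key x hx).hasFDerivAt.fderiv]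
  ext
  simp
end

section
/- Let n ≥ 7 be an integer, A ∈ ℝ, and let v : I → (0,∞) be a C⁶ function on an open interval I ⊆ ℝ solving the rescaled ODE −v⁽⁶⁾ + K₄v⁽⁴⁾ − K₂v″ + K₀v = A v^{(n+6)/(n−6)} on I. Then the function H_A(v)(t) = ½(v‴(t))² + (K₄/2)(v″(t))² + (K₂/2)(v′(t))² − (K₀/2)v(t)² + v⁽⁵⁾(t)v′(t) − v⁽⁴⁾(t)v″(t) − K₄v‴(t)v′(t) + ((n−6)A/(2n))|v(t)|^{2n/(n−6)} is constant on I. -/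
open Real Set Filter

lemma hasDerivAt_iteratedDeriv_aux {v : ℝ → ℝ} {I : Set ℝ} (hIopen : IsOpen I)
    (hv : ContDiffOn ℝ 6 v I) {m : ℕ} (hm : m < 6) {t : ℝ} (ht : t ∈ I) :
    HasDerivAt (iteratedDeriv m v) (iteratedDeriv (m + 1) v t) t := by
  have hEq : Set.EqOn (iteratedDeriv m v) (iteratedDerivWithin m v I) I := by
    intro x hx
    simp [iteratedDerivWithin_eq_iteratedFDerivWithin, iteratedDeriv_eq_iteratedFDeriv,
      iteratedFDerivWithin_of_isOpen m hIopen hx]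
  have hdw : DifferentiableWithinAt ℝ (iteratedDerivWithin m v I) I t :=
    hv.differentiableOn_iteratedDerivWithin (by exact_mod_cast hm) hIopen.uniqueDiffOn t ht
  have hda : DifferentiableAt ℝ (iteratedDeriv m v) t :=
    ((hdw.congr hEq (hEq ht)).differentiableAt (hIopen.mem_nhds ht))
  rw [iteratedDeriv_succ]
  exact hda.hasDerivAt

/-- for a positive `C⁶` solution of the rescaled ODE
`−v⁽⁶⁾ + K₄v⁽⁴⁾ − K₂v″ + K₀v = A v^((n+6)/(n−6))` on an open interval `I`, the rescaled
Hamiltonian `H_A(v)` is constant on `I`. -/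
theorem rescaled_hamiltonian_constant (n : ℕ) (hn : 7 ≤ n) (A : ℝ) (I : Set ℝ)
    (hIopen : IsOpen I) (hIinterval : I.OrdConnected) (v : ℝ → ℝ) (hv : ContDiffOn ℝ 6 v I)
    (hpos : ∀ t ∈ I, 0 < v t) (hode : ∀ t ∈ I, EmdenFowler n A v t) :
    ∀ s ∈ I, ∀ t ∈ I, Ham n A v s = Ham n A v t := by
  have hn7 : (7 : ℝ) ≤ (n : ℝ) := by exact_mod_cast hn
  have hn6 : (n : ℝ) - 6 ≠ 0 := by nlinarith
  have hn0 : (n : ℝ) ≠ 0 := by nlinarith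
  have key : ∀ x ∈ I, HasDerivAt (Ham n A v) 0 x := by
    intro x hx
    have h1 : HasDerivAt (deriv v) (iteratedDeriv 2 v x) x := by
      have := hasDerivAt_iteratedDeriv_aux hIopen hv (by norm_num : 1 < 6) hx
      rwa [iteratedDeriv_one] at this
    have h0 : HasDerivAt v (deriv v x) x := by
      have := hasDerivAt_iteratedDeriv_aux hIopen hv (by norm_num : 0 < 6) hx
      rwa [iteratedDeriv_zero, iteratedDeriv_one] at this
    have h2 := hasDerivAt_iteratedDeriv_aux hIopen hv (by norm_num : 2 < 6) hx
    have h3 := hasDerivAt_iteratedDeriv_aux hIopen hv (by norm_num : 3 < 6) hx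
    have h4 := hasDerivAt_iteratedDeriv_aux hIopen hv (by norm_num : 4 < 6) hx
    have h5 := hasDerivAt_iteratedDeriv_aux hIopen hv (by norm_num : 5 < 6) hx
    set q : ℝ := 2 * (n : ℝ) / ((n : ℝ) - 6) with hqdef
    have habs : (fun y => |v y| ^ q) =ᶠ[nhds x] fun y => v y ^ q :=
      Filter.eventuallyEq_of_mem (hIopen.mem_nhds hx)
        (fun y hy => by rw [abs_of_pos (hpos y hy)])
    have hq1 : q - 1 = ((n : ℝ) + 6) / ((n : ℝ) - 6) := by
      rw [hqdef, div_sub_one hn6]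
      congr 1
      ring
    have hr : HasDerivAt (fun y => |v y| ^ q)
        (deriv v x * q * v x ^ (((n : ℝ) + 6) / ((n : ℝ) - 6))) x := by
      have := (h0.rpow_const (p := q) (Or.inl (ne_of_gt (hpos x hx))))
      rw [hq1] at this
      exact this.congr_of_eventuallyEq habs
    have hH : HasDerivAt (Ham n A v)
        ((1 / 2 : ℝ) * ((2 : ℕ) * iteratedDeriv 3 v x ^ (2 - 1) * iteratedDeriv 4 v x)
          + (K4c n / 2) * ((2 : ℕ) * iteratedDeriv 2 v x ^ (2 - 1) * iteratedDeriv 3 v x)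
          + (K2c n / 2) * ((2 : ℕ) * deriv v x ^ (2 - 1) * iteratedDeriv 2 v x)
          - (K0c n / 2) * ((2 : ℕ) * v x ^ (2 - 1) * deriv v x)
          + (iteratedDeriv 6 v x * deriv v x + iteratedDeriv 5 v x * iteratedDeriv 2 v x)
          - (iteratedDeriv 5 v x * iteratedDeriv 2 v x
              + iteratedDeriv 4 v x * iteratedDeriv 3 v x)
          - ((K4c n * iteratedDeriv 4 v x) * deriv v x
              + (K4c n * iteratedDeriv 3 v x) * iteratedDeriv 2 v x)
          + ((n : ℝ) - 6) * A / (2 * (n : ℝ))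
              * (deriv v x * q * v x ^ (((n : ℝ) + 6) / ((n : ℝ) - 6)))) x := by
      unfold Ham
      exact ((((((((h3.pow 2).const_mul ((1:ℝ)/2)).add
        ((h2.pow 2).const_mul (K4c n / 2))).add
        ((h1.pow 2).const_mul (K2c n / 2))).sub
        ((h0.pow 2).const_mul (K0c n / 2))).add
        (h5.mul h1)).sub
        (h4.mul h2)).sub
        ((h3.const_mul (K4c n)).mul h1)).add
        (hr.const_mul (((n : ℝ) - 6) * A / (2 * (n : ℝ))))
    have hode' := hode x hx
    unfold EmdenFowler at hode'
    have hzero : ((1 / 2 : ℝ) * ((2 : ℕ) * iteratedDeriv 3 v x ^ (2 - 1) * iteratedDeriv 4 v x)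
          + (K4c n / 2) * ((2 : ℕ) * iteratedDeriv 2 v x ^ (2 - 1) * iteratedDeriv 3 v x)
          + (K2c n / 2) * ((2 : ℕ) * deriv v x ^ (2 - 1) * iteratedDeriv 2 v x)
          - (K0c n / 2) * ((2 : ℕ) * v x ^ (2 - 1) * deriv v x)
          + (iteratedDeriv 6 v x * deriv v x + iteratedDeriv 5 v x * iteratedDeriv 2 v x)
          - (iteratedDeriv 5 v x * iteratedDeriv 2 v x
              + iteratedDeriv 4 v x * iteratedDeriv 3 v x)
          - ((K4c n * iteratedDeriv 4 v x) * deriv v x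
              + (K4c n * iteratedDeriv 3 v x) * iteratedDeriv 2 v x)
          + ((n : ℝ) - 6) * A / (2 * (n : ℝ))
              * (deriv v x * q * v x ^ (((n : ℝ) + 6) / ((n : ℝ) - 6)))) = 0 := by
      have hcq : ((n : ℝ) - 6) * A / (2 * (n : ℝ)) * q = A := by
        rw [hqdef]; field_simp
      linear_combination (-(deriv v x)) * hode'
        + (v x ^ (((n : ℝ) + 6) / ((n : ℝ) - 6)) * deriv v x) * hcq
    rwa [hzero] at hH
  have hconv : Convex ℝ I := convex_iff_ordConnected.mpr hIinterval
  intro s hs t ht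
  exact hconv.is_const_of_fderivWithin_eq_zero
    (fun y hy => ((key y hy).differentiableAt).differentiableWithinAt)
    (fun y hy => by
      have h1 := (key y hy).hasFDerivAt.fderiv
      rw [fderivWithin_of_isOpen hIopen hy, h1]
      ext
      simp) hs ht
end

section
/- Let n ≥ 7 be an integer. The function v_sph(t) = (cosh t)^{−(n−6)/2} is a positive C^∞ solution on ℝ of the radial cylindrical Emden–Fowler ODE −v⁽⁶⁾ + K₄v⁽⁴⁾ − K₂v″ + K₀v = c_n v^{(n+6)/(n−6)}. -/
open Real Set Filter

/-- Derivative of a degree-≤6 polynomial. -/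
lemma polyHasDeriv (c0 c1 c2 c3 c4 c5 c6 x : ℝ) :
    HasDerivAt (fun x : ℝ => c0 + c1*x + c2*x^2 + c3*x^3 + c4*x^4 + c5*x^5 + c6*x^6)
      (c1 + 2*c2*x + 3*c3*x^2 + 4*c4*x^3 + 5*c5*x^4 + 6*c6*x^5) x := by
  have h0 : HasDerivAt (fun _ : ℝ => c0) 0 x := hasDerivAt_const x c0
  have h1 : HasDerivAt (fun x : ℝ => c1 * x) (c1 * 1) x := (hasDerivAt_id x).const_mul c1
  have h2 := (hasDerivAt_pow 2 x).const_mul c2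
  have h3 := (hasDerivAt_pow 3 x).const_mul c3
  have h4 := (hasDerivAt_pow 4 x).const_mul c4
  have h5 := (hasDerivAt_pow 5 x).const_mul c5
  have h6 := (hasDerivAt_pow 6 x).const_mul c6
  have : HasDerivAt (fun x : ℝ => c0 + c1*x + c2*x^2 + c3*x^3 + c4*x^4 + c5*x^5 + c6*x^6) _ x :=
    (((((h0.add h1).add h2).add h3).add h4).add h5).add h6
  convert this using 1
  push_cast
  norm_num
  ring

noncomputable def q0 (a x : ℝ) : ℝ := 1 + 0*x + 0*x^2 + 0*x^3 + 0*x^4 + 0*x^5 + 0*x^6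
noncomputable def q1 (a x : ℝ) : ℝ := 0 + (-a)*x + 0*x^2 + 0*x^3 + 0*x^4 + 0*x^5 + 0*x^6
noncomputable def q2 (a x : ℝ) : ℝ := (-a) + 0*x + (a^2)*x^2 + 0*x^3 + 0*x^4 + 0*x^5 + 0*x^6
noncomputable def q3 (a x : ℝ) : ℝ := 0 + (3*a^2+2*a)*x + 0*x^2 + (-a^3)*x^3 + 0*x^4 + 0*x^5 + 0*x^6
noncomputable def q4 (a x : ℝ) : ℝ :=
  (3*a^2+2*a) + 0*x + (-(6*a^3+8*a^2+4*a))*x^2 + 0*x^3 + (a^4)*x^4 + 0*x^5 + 0*x^6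
noncomputable def q5 (a x : ℝ) : ℝ :=
  0 + (-(15*a^3+30*a^2+16*a))*x + 0*x^2 + (10*a^4+20*a^3+20*a^2+8*a)*x^3 + 0*x^4
    + (-a^5)*x^5 + 0*x^6
noncomputable def q6 (a x : ℝ) : ℝ :=
  (-(15*a^3+30*a^2+16*a)) + 0*x + (45*a^4+150*a^3+196*a^2+88*a)*x^2 + 0*x^3
    + (-(15*a^5+40*a^4+60*a^3+48*a^2+16*a))*x^4 + 0*x^5 + (a^6)*x^6

/-- Generic differentiation step for `cosh t ^ b * Q (sinh t)`. -/
lemma stepDeriv (b c : ℝ) (Q Q' R : ℝ → ℝ) (hQ : ∀ x, HasDerivAt Q (Q' x) x)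
    (hbc : b = c + 1)
    (hR : ∀ s : ℝ, b * s * Q s + (s ^ 2 + 1) * Q' s = R s) (t : ℝ) :
    HasDerivAt (fun t => Real.cosh t ^ b * Q (Real.sinh t))
      (Real.cosh t ^ c * R (Real.sinh t)) t := by
  have hc := Real.cosh_pos t
  have h1 : HasDerivAt (fun t => Real.cosh t ^ b)
      (Real.sinh t * b * Real.cosh t ^ (b - 1)) t :=
    (Real.hasDerivAt_cosh t).rpow_const (Or.inl hc.ne')
  have h2 : HasDerivAt (fun t => Q (Real.sinh t)) (Q' (Real.sinh t) * Real.cosh t) t :=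
    HasDerivAt.comp t (hQ _) (Real.hasDerivAt_sinh t)
  have h3 : HasDerivAt (fun t => Real.cosh t ^ b * Q (Real.sinh t)) _ t := h1.mul h2
  convert h3 using 1
  rw [← hR]
  have hb1 : b - 1 = c := by rw [hbc]; ring
  rw [hb1, hbc, Real.rpow_add hc, Real.rpow_one]
  have h2c : Real.cosh t * Real.cosh t = Real.sinh t ^ 2 + 1 := by
    rw [← Real.cosh_sq t]; ring
  linear_combination (-(Real.cosh t ^ c * Q' (Real.sinh t))) * h2c

/-- `v(t) = (cosh t)^(−(n−6)/2)` is a positive smooth solution on `ℝ` of the radial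
cylindrical Emden–Fowler ODE `−v⁽⁶⁾ + K₄v⁽⁴⁾ − K₂v″ + K₀v = c_n v^((n+6)/(n−6))`. -/
theorem spherical_cylindrical_solution (n : ℕ) (hn : 7 ≤ n) :
    (∀ t : ℝ, 0 < Real.cosh t ^ (-(((n:ℝ) - 6) / 2))) ∧
    ContDiff ℝ (⊤ : ℕ∞) (fun t : ℝ => Real.cosh t ^ (-(((n:ℝ) - 6) / 2))) ∧
    ∀ t : ℝ, EmdenFowler n (cQ n) (fun s : ℝ => Real.cosh s ^ (-(((n:ℝ) - 6) / 2))) t := by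
  have hn7 : (7:ℝ) ≤ (n:ℝ) := by exact_mod_cast hn
  set a : ℝ := ((n:ℝ) - 6) / 2 with ha
  refine ⟨fun t => Real.rpow_pos_of_pos (Real.cosh_pos t) _, ?_, ?_⟩
  · rw [contDiff_iff_contDiffAt]
    intro t
    exact (Real.contDiffAt_rpow_const_of_ne (Real.cosh_pos t).ne').comp t
      Real.contDiff_cosh.contDiffAt
  · -- the ODE
    have hv : (fun t : ℝ => Real.cosh t ^ (-(((n:ℝ) - 6) / 2)))
        = fun t => Real.cosh t ^ (-a) * q0 a (Real.sinh t) := by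
      funext t; simp [q0, ha]
    intro t
    unfold EmdenFowler
    rw [hv]
    set w : ℝ → ℝ := fun t => Real.cosh t ^ (-a) * q0 a (Real.sinh t) with hw
    have hq0 : ∀ x, HasDerivAt (q0 a) (0 + 2*0*x + 3*0*x^2 + 4*0*x^3 + 5*0*x^4 + 6*0*x^5) x :=
      fun x => polyHasDeriv 1 0 0 0 0 0 0 x
    have hq1 : ∀ x, HasDerivAt (q1 a) ((-a) + 2*0*x + 3*0*x^2 + 4*0*x^3 + 5*0*x^4 + 6*0*x^5) x :=
      fun x => polyHasDeriv 0 (-a) 0 0 0 0 0 x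
    have hq2 : ∀ x, HasDerivAt (q2 a) (0 + 2*(a^2)*x + 3*0*x^2 + 4*0*x^3 + 5*0*x^4 + 6*0*x^5) x :=
      fun x => polyHasDeriv (-a) 0 (a^2) 0 0 0 0 x
    have hq3 : ∀ x, HasDerivAt (q3 a)
        ((3*a^2+2*a) + 2*0*x + 3*(-a^3)*x^2 + 4*0*x^3 + 5*0*x^4 + 6*0*x^5) x :=
      fun x => polyHasDeriv 0 (3*a^2+2*a) 0 (-a^3) 0 0 0 x
    have hq4 : ∀ x, HasDerivAt (q4 a)
        (0 + 2*(-(6*a^3+8*a^2+4*a))*x + 3*0*x^2 + 4*(a^4)*x^3 + 5*0*x^4 + 6*0*x^5) x :=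
      fun x => polyHasDeriv (3*a^2+2*a) 0 (-(6*a^3+8*a^2+4*a)) 0 (a^4) 0 0 x
    have hq5 : ∀ x, HasDerivAt (q5 a)
        ((-(15*a^3+30*a^2+16*a)) + 2*0*x + 3*(10*a^4+20*a^3+20*a^2+8*a)*x^2 + 4*0*x^3
          + 5*(-a^5)*x^4 + 6*0*x^5) x :=
      fun x => polyHasDeriv 0 (-(15*a^3+30*a^2+16*a)) 0 (10*a^4+20*a^3+20*a^2+8*a) 0 (-a^5) 0 x
    have e1 : iteratedDeriv 1 w = fun t => Real.cosh t ^ (-a - 1) * q1 a (Real.sinh t) := by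
      rw [iteratedDeriv_one]; funext t
      exact (stepDeriv (-a) (-a-1) (q0 a) _ (q1 a) hq0 (by ring)
        (fun s => by simp only [q0, q1]; ring) t).deriv
    have e2 : iteratedDeriv 2 w = fun t => Real.cosh t ^ (-a - 2) * q2 a (Real.sinh t) := by
      have h : iteratedDeriv 2 w = deriv (iteratedDeriv 1 w) := iteratedDeriv_succ
      rw [h, e1]; funext t
      exact (stepDeriv (-a-1) (-a-2) (q1 a) _ (q2 a) hq1 (by ring)
        (fun s => by simp only [q1, q2]; ring) t).deriv
    have e3 : iteratedDeriv 3 w = fun t => Real.cosh t ^ (-a - 3) * q3 a (Real.sinh t) := by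
      have h : iteratedDeriv 3 w = deriv (iteratedDeriv 2 w) := iteratedDeriv_succ
      rw [h, e2]; funext t
      exact (stepDeriv (-a-2) (-a-3) (q2 a) _ (q3 a) hq2 (by ring)
        (fun s => by simp only [q2, q3]; ring) t).deriv
    have e4 : iteratedDeriv 4 w = fun t => Real.cosh t ^ (-a - 4) * q4 a (Real.sinh t) := by
      have h : iteratedDeriv 4 w = deriv (iteratedDeriv 3 w) := iteratedDeriv_succ
      rw [h, e3]; funext t
      exact (stepDeriv (-a-3) (-a-4) (q3 a) _ (q4 a) hq3 (by ring)
        (fun s => by simp only [q3, q4]; ring) t).deriv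
    have e5 : iteratedDeriv 5 w = fun t => Real.cosh t ^ (-a - 5) * q5 a (Real.sinh t) := by
      have h : iteratedDeriv 5 w = deriv (iteratedDeriv 4 w) := iteratedDeriv_succ
      rw [h, e4]; funext t
      exact (stepDeriv (-a-4) (-a-5) (q4 a) _ (q5 a) hq4 (by ring)
        (fun s => by simp only [q4, q5]; ring) t).deriv
    have e6 : iteratedDeriv 6 w = fun t => Real.cosh t ^ (-a - 6) * q6 a (Real.sinh t) := by
      have h : iteratedDeriv 6 w = deriv (iteratedDeriv 5 w) := iteratedDeriv_succ
      rw [h, e5]; funext t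
      exact (stepDeriv (-a-5) (-a-6) (q5 a) _ (q6 a) hq5 (by ring)
        (fun s => by simp only [q5, q6]; ring) t).deriv
    simp only [e2, e4, e6]
    have hc := Real.cosh_pos t
    -- simplify w t and the nonlinear term
    have hwt : w t = Real.cosh t ^ (-a) := by simp [hw, q0]
    have hne : ((n:ℝ) - 6) ≠ 0 := by nlinarith
    have hpow : (Real.cosh t ^ (-a)) ^ (((n:ℝ) + 6) / ((n:ℝ) - 6))
        = Real.cosh t ^ (-a - 6) := by
      rw [← Real.rpow_mul hc.le]
      congr 1
      rw [ha]
      field_simp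
      ring
    rw [hwt, hpow]
    have key : ∀ m : ℕ, Real.cosh t ^ (-a - 6 + (m:ℝ))
        = Real.cosh t ^ (-a - 6) * Real.cosh t ^ m := fun m => by
      rw [Real.rpow_add hc, Real.rpow_natCast]
    have h0 : Real.cosh t ^ (-a) = Real.cosh t ^ (-a-6) * Real.cosh t ^ (6:ℕ) := by
      rw [← key 6]; congr 1; push_cast; ring
    have h2 : Real.cosh t ^ (-a-2) = Real.cosh t ^ (-a-6) * Real.cosh t ^ (4:ℕ) := by
      rw [← key 4]; congr 1; push_cast; ring
    have h4 : Real.cosh t ^ (-a-4) = Real.cosh t ^ (-a-6) * Real.cosh t ^ (2:ℕ) := by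
      rw [← key 2]; congr 1; push_cast; ring
    rw [h0, h2, h4]
    have hsq : Real.cosh t ^ 2 = Real.sinh t ^ 2 + 1 := Real.cosh_sq t
    have hsq4 : Real.cosh t ^ (4:ℕ) = (Real.sinh t ^ 2 + 1) ^ 2 := by rw [← hsq]; ring
    have hsq6 : Real.cosh t ^ (6:ℕ) = (Real.sinh t ^ 2 + 1) ^ 3 := by rw [← hsq]; ring
    rw [hsq6, hsq4, hsq]
    simp only [q2, q4, q6, K0c, K2c, K4c, cQ, ha]
    ring
end

section
/- Let n ≥ 7 be an integer, R ∈ (0,∞], T = −ln R (with T = −∞ when R = ∞), and let v : (T,∞) → (0,∞) be a C⁶ function. Define u on the punctured ball B_R* = {x ∈ ℝⁿ : 0 < |x| < R} by u(x) = |x|^{−(n−6)/2} v(−ln|x|). Then u satisfies (−Δ)³u = c_n u^{(n+6)/(n−6)} on B_R* if and only if v satisfies −v⁽⁶⁾ + K₄v⁽⁴⁾ − K₂v″ + K₀v = c_n v^{(n+6)/(n−6)} on (T,∞). (Emden–Fowler / cylindrical change of variables for radially symmetric functions.) -/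
open Real Set Filter Metric

/-- The Euclidean Laplacian of `f : ℝⁿ → ℝ` at `x`, as the sum of the second derivatives of `f`
along the coordinate directions. -/
noncomputable def lap (n : ℕ) (f : EuclideanSpace ℝ (Fin n) → ℝ)
    (x : EuclideanSpace ℝ (Fin n)) : ℝ :=
  ∑ i : Fin n, iteratedDeriv 2 (fun s : ℝ => f (x + s • EuclideanSpace.single i (1:ℝ))) 0

/-- `(−Δ)³ f` at `x`, i.e. `−Δ(Δ(Δ f))(x)`. -/
noncomputable def negLapCubed (n : ℕ) (f : EuclideanSpace ℝ (Fin n) → ℝ)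
    (x : EuclideanSpace ℝ (Fin n)) : ℝ :=
  -(lap n (lap n (lap n f)) x)

/-- The sixth order constant `Q`-curvature equation `(−Δ)³u = c_n u^((n+6)/(n−6))` at `x`. -/
def QcurvEq (n : ℕ) (u : EuclideanSpace ℝ (Fin n) → ℝ) (x : EuclideanSpace ℝ (Fin n)) : Prop :=
  negLapCubed n u x = cQ n * u x ^ (((n:ℝ) + 6) / ((n:ℝ) - 6))
open scoped ENNReal

lemma hasDerivAt_iteratedDeriv_of_contDiffOn {v : ℝ → ℝ} {U : Set ℝ} (hU : IsOpen U)
    (hv : ContDiffOn ℝ 6 v U) (j : ℕ) (hj : j < 6) {t : ℝ} (ht : t ∈ U) :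
    HasDerivAt (iteratedDeriv j v) (iteratedDeriv (j+1) v t) t := by
  have h1 : DifferentiableOn ℝ (iteratedDerivWithin j v U) U :=
    hv.differentiableOn_iteratedDerivWithin (by exact_mod_cast hj) hU.uniqueDiffOn
  have h2 : DifferentiableOn ℝ (iteratedDeriv j v) U :=
    h1.congr (fun y hy => by
      rw [iteratedDerivWithin_eq_iteratedFDerivWithin, iteratedDeriv_eq_iteratedFDeriv,
        iteratedFDerivWithin_of_isOpen j hU hy])
  have h3 : DifferentiableAt ℝ (iteratedDeriv j v) t :=
    (h2 t ht).differentiableAt (hU.mem_nhds ht)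
  rw [iteratedDeriv_succ]
  exact h3.hasDerivAt

lemma lap_radial (n : ℕ) (S : Set ℝ) (hS : IsOpen S) (h h' h'' : ℝ → ℝ)
    (hd : ∀ y ∈ S, HasDerivAt h (h' y) y)
    (hd' : ∀ y ∈ S, HasDerivAt h' (h'' y) y)
    (u : EuclideanSpace ℝ (Fin n) → ℝ)
    (hu : ∀ z : EuclideanSpace ℝ (Fin n), ‖z‖ ^ 2 ∈ S → u z = h (‖z‖ ^ 2))
    (x : EuclideanSpace ℝ (Fin n)) (hx : ‖x‖ ^ 2 ∈ S) :
    lap n u x = 4 * ‖x‖ ^ 2 * h'' (‖x‖ ^ 2) + 2 * n * h' (‖x‖ ^ 2) := by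
  have key : ∀ i : Fin n,
      iteratedDeriv 2 (fun s : ℝ => u (x + s • EuclideanSpace.single i (1:ℝ))) 0
        = 4 * (x i) ^ 2 * h'' (‖x‖ ^ 2) + 2 * h' (‖x‖ ^ 2) := by
    intro i
    set e : EuclideanSpace ℝ (Fin n) := EuclideanSpace.single i (1:ℝ) with he
    set q : ℝ → ℝ := fun s => ‖x‖ ^ 2 + (2 * x i) * s + s ^ 2 with hqdef
    have hnorm : ∀ s : ℝ, ‖x + s • e‖ ^ 2 = q s := by
      intro s
      rw [norm_add_sq_real, hqdef]
      have h1 : inner ℝ x (s • e) = s * x i := by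
        rw [real_inner_smul_right, he, EuclideanSpace.inner_single_right]
        simp
      have h2 : ‖s • e‖ = |s| := by
        rw [norm_smul, he, EuclideanSpace.norm_single]
        simp [Real.norm_eq_abs]
      rw [h1, h2, sq_abs]
      ring
    have hq : ∀ s : ℝ, HasDerivAt q (2 * x i + 2 * s) s := by
      intro s
      have h1 : HasDerivAt q (0 + (2 * x i) * 1 + 2 * s ^ 1) s :=
        ((hasDerivAt_const s (‖x‖^2)).add ((hasDerivAt_id s).const_mul (2 * x i))).add
          (hasDerivAt_pow 2 s)
      simpa using h1
    have hq0 : q 0 = ‖x‖ ^ 2 := by simp [hqdef]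
    have hmem : ∀ᶠ s in nhds (0:ℝ), q s ∈ S := by
      have hc : Continuous q := by fun_prop
      have := hc.continuousAt (x := (0:ℝ))
      have : q ⁻¹' S ∈ nhds (0:ℝ) := hc.continuousAt.preimage_mem_nhds (by rw [hq0]; exact hS.mem_nhds hx)
      exact this
    have hfg : (fun s : ℝ => u (x + s • e)) =ᶠ[nhds 0] fun s => h (q s) := by
      filter_upwards [hmem] with s hs
      rw [hu _ (by rw [hnorm]; exact hs), hnorm]
    have hgG : deriv (fun s => h (q s)) =ᶠ[nhds 0] fun s => h' (q s) * (2 * x i + 2 * s) := by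
      filter_upwards [hmem] with s hs
      exact ((hd _ hs).comp s (hq s)).deriv
    have hG : HasDerivAt (fun s => h' (q s) * (2 * x i + 2 * s))
        (h'' (q 0) * (2 * x i + 2 * 0) * (2 * x i + 2 * 0) + h' (q 0) * 2) 0 := by
      exact ((hd' _ (by rw [hq0]; exact hx)).comp 0 (hq 0)).mul
        (by simpa using (((hasDerivAt_id (0:ℝ)).const_mul 2).const_add (2 * x i)))
    have e1 : iteratedDeriv 2 (fun s : ℝ => u (x + s • e)) 0
        = deriv (deriv (fun s : ℝ => u (x + s • e))) 0 := by
      simp [iteratedDeriv_succ, iteratedDeriv_zero]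
    rw [e1, (hfg.deriv).deriv_eq, Filter.EventuallyEq.deriv_eq hgG, hG.deriv, hq0]
    ring
  rw [lap]
  rw [Finset.sum_congr rfl fun i _ => key i, Finset.sum_add_distrib]
  rw [Finset.sum_const, ← Finset.sum_mul]
  have hsum : ∑ i : Fin n, (4 * (x i) ^ 2) = 4 * ‖x‖ ^ 2 := by
    rw [← Finset.mul_sum]
    congr 1
    rw [EuclideanSpace.norm_eq, Real.sq_sqrt (by positivity)]
    exact Finset.sum_congr rfl fun i _ => by rw [Real.norm_eq_abs, sq_abs]
  rw [hsum, Finset.card_univ, Fintype.card_fin, nsmul_eq_mul]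
  ring

lemma hda_pow_mul (b : ℝ) (w w' : ℝ → ℝ) (y : ℝ) (hy : 0 < y)
    (hw : HasDerivAt w (w' (-(Real.log y)/2)) (-(Real.log y)/2)) :
    HasDerivAt (fun z : ℝ => z ^ b * w (-(Real.log z)/2))
      (y ^ (b-1) * (b * w (-(Real.log y)/2) - w' (-(Real.log y)/2)/2)) y := by
  have hτ : HasDerivAt (fun z : ℝ => -(Real.log z)/2) (-(1/y)/2) y := by
    simpa using ((Real.hasDerivAt_log hy.ne').neg).div_const 2
  have hcomp := hw.comp y hτ
  have hpow : HasDerivAt (fun z : ℝ => z ^ b) (b * y ^ (b-1)) y :=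
    Real.hasDerivAt_rpow_const (Or.inl hy.ne')
  have hmul := hpow.mul hcomp
  refine hmul.congr_deriv ?_
  simp only [Function.comp_apply]
  rw [Real.rpow_sub_one hy.ne']
  field_simp
  ring

lemma stage (n : ℕ) (U : Set ℝ) (hU : IsOpen U) (b : ℝ) (w w' w'' : ℝ → ℝ)
    (hw : ∀ t ∈ U, HasDerivAt w (w' t) t) (hw' : ∀ t ∈ U, HasDerivAt w' (w'' t) t)
    (u : EuclideanSpace ℝ (Fin n) → ℝ)
    (hu : ∀ z : EuclideanSpace ℝ (Fin n), 0 < ‖z‖ → -(Real.log (‖z‖^2))/2 ∈ U →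
       u z = (‖z‖^2) ^ b * w (-(Real.log (‖z‖^2))/2)) :
    ∀ x : EuclideanSpace ℝ (Fin n), 0 < ‖x‖ → -(Real.log (‖x‖^2))/2 ∈ U →
      lap n u x = (‖x‖^2) ^ (b-1) *
        (w'' (-(Real.log (‖x‖^2))/2) + (2 - 4*b - n) * w' (-(Real.log (‖x‖^2))/2)
          + 2*b*(2*b - 2 + n) * w (-(Real.log (‖x‖^2))/2)) := by
  intro x hx hxU
  set S : Set ℝ := {y : ℝ | 0 < y ∧ -(Real.log y)/2 ∈ U} with hSdef
  have hS : IsOpen S := by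
    have hc : ContinuousOn (fun y : ℝ => -(Real.log y)/2) (Ioi (0:ℝ)) :=
      ((Real.continuousOn_log.mono (fun y hy => ne_of_gt hy)).neg).div_const 2
    have := hc.isOpen_inter_preimage isOpen_Ioi hU
    convert this using 1
    rfl
  set τ : ℝ → ℝ := fun z => -(Real.log z)/2 with hτdef
  set wh : ℝ → ℝ := fun t => b * w t - w' t / 2 with hwh
  set wh' : ℝ → ℝ := fun t => b * w' t - w'' t / 2 with hwh'
  set h : ℝ → ℝ := fun z => z ^ b * w (τ z) with hh
  set h₁ : ℝ → ℝ := fun z => z ^ (b-1) * wh (τ z) with hh₁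
  set h₂ : ℝ → ℝ := fun z => z ^ (b-1-1) * ((b-1) * wh (τ z) - wh' (τ z)/2) with hh₂
  have hd : ∀ y ∈ S, HasDerivAt h (h₁ y) y := by
    intro y hy
    have := hda_pow_mul b w w' y hy.1 (hw _ hy.2)
    convert this using 1
  have hd' : ∀ y ∈ S, HasDerivAt h₁ (h₂ y) y := by
    intro y hy
    exact hda_pow_mul (b-1) wh wh' y hy.1
      (((hw _ hy.2).const_mul b).sub ((hw' _ hy.2).div_const 2))
  have hx2 : ‖x‖ ^ 2 ∈ S := ⟨by positivity, hxU⟩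
  have := lap_radial n S hS h h₁ h₂ hd hd' u
    (fun z hz => hu z (by nlinarith [norm_nonneg z, hz.1]) hz.2) x hx2
  rw [this]
  have hy0 : (0:ℝ) < ‖x‖ ^ 2 := by positivity
  simp only [hh₁, hh₂, hwh, hwh', hτdef]
  rw [show b - 1 - 1 = (b-1) - 1 by ring, Real.rpow_sub_one hy0.ne']
  field_simp
  ring


/-- Emden–Fowler / cylindrical change of variables. Let `R ∈ (0,∞]` and let
`v` be positive and `C⁶` on `(T,∞) = {t | e^{−t} < R}` (`T = −ln R`). Then
`u(x) = |x|^(−(n−6)/2) v(−ln|x|)` solves `(−Δ)³u = c_n u^((n+6)/(n−6))` on the punctured ball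
`B_R* = {0 < |x| < R}` iff `v` solves `−v⁽⁶⁾ + K₄v⁽⁴⁾ − K₂v″ + K₀v = c_n v^((n+6)/(n−6))`
on `(T,∞)`. -/
theorem emden_fowler_change_of_variables (n : ℕ) (hn : 7 ≤ n) (R : ℝ≥0∞) (hR : 0 < R)
    (v : ℝ → ℝ) (hv : ContDiffOn ℝ 6 v {t : ℝ | ENNReal.ofReal (Real.exp (-t)) < R})
    (hvpos : ∀ t, ENNReal.ofReal (Real.exp (-t)) < R → 0 < v t)
    (u : EuclideanSpace ℝ (Fin n) → ℝ)
    (hu : ∀ x : EuclideanSpace ℝ (Fin n), x ≠ 0 →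
      u x = ‖x‖ ^ (-(((n:ℝ) - 6) / 2)) * v (-Real.log ‖x‖)) :
    (∀ x : EuclideanSpace ℝ (Fin n), x ≠ 0 → ENNReal.ofReal ‖x‖ < R → QcurvEq n u x) ↔
      (∀ t : ℝ, ENNReal.ofReal (Real.exp (-t)) < R → EmdenFowler n (cQ n) v t) := by
  have hn6 : ((n:ℝ) - 6) ≠ 0 := by
    have : (7:ℝ) ≤ (n:ℝ) := by exact_mod_cast hn
    linarith
  set U : Set ℝ := {t : ℝ | ENNReal.ofReal (Real.exp (-t)) < R} with hUdef
  have hUopen : IsOpen U := by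
    have hc : Continuous (fun t : ℝ => ENNReal.ofReal (Real.exp (-t))) :=
      ENNReal.continuous_ofReal.comp (Real.continuous_exp.comp continuous_neg)
    exact hc.isOpen_preimage (Set.Iio R) isOpen_Iio
  -- membership translation
  have hmem : ∀ x : EuclideanSpace ℝ (Fin n), x ≠ 0 →
      (ENNReal.ofReal ‖x‖ < R ↔ -Real.log ‖x‖ ∈ U) := by
    intro x hx
    have hx0 : 0 < ‖x‖ := norm_pos_iff.2 hx
    simp only [hUdef, Set.mem_setOf_eq, neg_neg, Real.exp_log hx0]
  have hd : ∀ j, j < 6 → ∀ t ∈ U, HasDerivAt (iteratedDeriv j v) (iteratedDeriv (j+1) v t) t :=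
    fun j hj t ht => hasDerivAt_iteratedDeriv_of_contDiffOn hUopen hv j hj ht
  have hdv : ∀ t ∈ U, HasDerivAt v (iteratedDeriv 1 v t) t := by
    have := hd 0 (by norm_num)
    simpa only [iteratedDeriv_zero] using this
  -- the pipeline
  set b₀ : ℝ := -(((n:ℝ) - 6)/4) with hb₀
  -- key pointwise equivalence
  have key : ∀ x : EuclideanSpace ℝ (Fin n), x ≠ 0 → -Real.log ‖x‖ ∈ U →
      (QcurvEq n u x ↔ EmdenFowler n (cQ n) v (-Real.log ‖x‖)) := by
    intro x hx htU
    have hx0 : 0 < ‖x‖ := norm_pos_iff.2 hx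
    have hlog2 : ∀ z : EuclideanSpace ℝ (Fin n), 0 < ‖z‖ →
        -(Real.log (‖z‖^2))/2 = -Real.log ‖z‖ := by
      intro z hz
      rw [Real.log_pow]
      push_cast
      ring
    have hsqpow : ∀ (z : EuclideanSpace ℝ (Fin n)) (c : ℝ), ((‖z‖^2 : ℝ)) ^ c = ‖z‖ ^ (2*c) := by
      intro z c
      rw [← Real.rpow_natCast ‖z‖ 2, ← Real.rpow_mul (norm_nonneg z)]
      norm_num
    -- stage 1
    have hu₀ : ∀ z : EuclideanSpace ℝ (Fin n), 0 < ‖z‖ → -(Real.log (‖z‖^2))/2 ∈ U →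
        u z = (‖z‖^2) ^ b₀ * v (-(Real.log (‖z‖^2))/2) := by
      intro z hz hzU
      rw [hu z (norm_pos_iff.1 hz), hlog2 z hz, hsqpow z b₀]
      congr 2
      rw [hb₀]; ring
    have S1 := stage n U hUopen b₀ v (iteratedDeriv 1 v) (iteratedDeriv 2 v)
      hdv (hd 1 (by norm_num)) u hu₀
    -- stage 2
    set B0 : ℝ → ℝ := fun t => iteratedDeriv 2 v t + (2 - 4*b₀ - (n:ℝ)) * iteratedDeriv 1 v t
      + 2*b₀*(2*b₀ - 2 + (n:ℝ)) * v t with hB0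
    set B1 : ℝ → ℝ := fun t => iteratedDeriv 3 v t + (2 - 4*b₀ - (n:ℝ)) * iteratedDeriv 2 v t
      + 2*b₀*(2*b₀ - 2 + (n:ℝ)) * iteratedDeriv 1 v t with hB1
    set B2 : ℝ → ℝ := fun t => iteratedDeriv 4 v t + (2 - 4*b₀ - (n:ℝ)) * iteratedDeriv 3 v t
      + 2*b₀*(2*b₀ - 2 + (n:ℝ)) * iteratedDeriv 2 v t with hB2
    set B3 : ℝ → ℝ := fun t => iteratedDeriv 5 v t + (2 - 4*b₀ - (n:ℝ)) * iteratedDeriv 4 v t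
      + 2*b₀*(2*b₀ - 2 + (n:ℝ)) * iteratedDeriv 3 v t with hB3
    set B4 : ℝ → ℝ := fun t => iteratedDeriv 6 v t + (2 - 4*b₀ - (n:ℝ)) * iteratedDeriv 5 v t
      + 2*b₀*(2*b₀ - 2 + (n:ℝ)) * iteratedDeriv 4 v t with hB4
    have hB0d : ∀ t ∈ U, HasDerivAt B0 (B1 t) t := fun t ht =>
      ((hd 2 (by norm_num) t ht).add
        ((hd 1 (by norm_num) t ht).const_mul _)).add ((hdv t ht).const_mul _)
    have hB1d : ∀ t ∈ U, HasDerivAt B1 (B2 t) t := fun t ht =>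
      ((hd 3 (by norm_num) t ht).add
        ((hd 2 (by norm_num) t ht).const_mul _)).add ((hd 1 (by norm_num) t ht).const_mul _)
    have hB2d : ∀ t ∈ U, HasDerivAt B2 (B3 t) t := fun t ht =>
      ((hd 4 (by norm_num) t ht).add
        ((hd 3 (by norm_num) t ht).const_mul _)).add ((hd 2 (by norm_num) t ht).const_mul _)
    have hB3d : ∀ t ∈ U, HasDerivAt B3 (B4 t) t := fun t ht =>
      ((hd 5 (by norm_num) t ht).add
        ((hd 4 (by norm_num) t ht).const_mul _)).add ((hd 3 (by norm_num) t ht).const_mul _)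
    have hu₁ : ∀ z : EuclideanSpace ℝ (Fin n), 0 < ‖z‖ → -(Real.log (‖z‖^2))/2 ∈ U →
        lap n u z = (‖z‖^2) ^ (b₀-1) * B0 (-(Real.log (‖z‖^2))/2) :=
      fun z hz hzU => S1 z hz hzU
    have S2 := stage n U hUopen (b₀-1) B0 B1 B2 hB0d hB1d (lap n u) hu₁
    -- stage 3
    set W0 : ℝ → ℝ := fun t => B2 t + (2 - 4*(b₀-1) - (n:ℝ)) * B1 t
      + 2*(b₀-1)*(2*(b₀-1) - 2 + (n:ℝ)) * B0 t with hW0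
    set W1 : ℝ → ℝ := fun t => B3 t + (2 - 4*(b₀-1) - (n:ℝ)) * B2 t
      + 2*(b₀-1)*(2*(b₀-1) - 2 + (n:ℝ)) * B1 t with hW1
    set W2 : ℝ → ℝ := fun t => B4 t + (2 - 4*(b₀-1) - (n:ℝ)) * B3 t
      + 2*(b₀-1)*(2*(b₀-1) - 2 + (n:ℝ)) * B2 t with hW2
    have hW0d : ∀ t ∈ U, HasDerivAt W0 (W1 t) t := fun t ht =>
      ((hB2d t ht).add ((hB1d t ht).const_mul _)).add ((hB0d t ht).const_mul _)
    have hW1d : ∀ t ∈ U, HasDerivAt W1 (W2 t) t := fun t ht =>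
      ((hB3d t ht).add ((hB2d t ht).const_mul _)).add ((hB1d t ht).const_mul _)
    have hu₂ : ∀ z : EuclideanSpace ℝ (Fin n), 0 < ‖z‖ → -(Real.log (‖z‖^2))/2 ∈ U →
        lap n (lap n u) z = (‖z‖^2) ^ (b₀-1-1) * W0 (-(Real.log (‖z‖^2))/2) :=
      fun z hz hzU => S2 z hz hzU
    have S3 := stage n U hUopen (b₀-1-1) W0 W1 W2 hW0d hW1d (lap n (lap n u)) hu₂
    -- assemble
    set t : ℝ := -Real.log ‖x‖ with ht
    have htU2 : -(Real.log (‖x‖^2))/2 ∈ U := by rw [hlog2 x hx0]; exact htU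
    have hS3 := S3 x hx0 htU2
    rw [hlog2 x hx0, hsqpow x (b₀-1-1-1)] at hS3
    -- the full ODE operator
    set E : ℝ := W2 t + (2 - 4*(b₀-1-1) - (n:ℝ)) * W1 t
      + 2*(b₀-1-1)*(2*(b₀-1-1) - 2 + (n:ℝ)) * W0 t with hE
    have hEF : -E = -(iteratedDeriv 6 v t) + K4c n * iteratedDeriv 4 v t
        - K2c n * iteratedDeriv 2 v t + K0c n * v t := by
      simp only [hE, hW0, hW1, hW2, hB0, hB1, hB2, hB3, hB4, hb₀, K4c, K2c, K0c]
      ring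
    -- power bookkeeping
    have hF : (0:ℝ) < ‖x‖ ^ (2*(b₀-1-1-1)) := Real.rpow_pos_of_pos hx0 _
    have hupow : u x ^ (((n:ℝ) + 6) / ((n:ℝ) - 6))
        = ‖x‖ ^ (2*(b₀-1-1-1)) * v t ^ (((n:ℝ) + 6) / ((n:ℝ) - 6)) := by
      rw [hu x hx, Real.mul_rpow (Real.rpow_nonneg (norm_nonneg x) _) (hvpos t htU).le,
        ← Real.rpow_mul (norm_nonneg x)]
      congr 2
      rw [hb₀]
      field_simp
      ring
    have step : QcurvEq n u x ↔
        (-E = cQ n * v t ^ (((n:ℝ) + 6) / ((n:ℝ) - 6))) := by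
      unfold QcurvEq negLapCubed
      rw [hS3, hupow]
      rw [show -(‖x‖ ^ (2*(b₀-1-1-1)) * E) = ‖x‖ ^ (2*(b₀-1-1-1)) * (-E) by ring,
        show cQ n * (‖x‖ ^ (2*(b₀-1-1-1)) * v t ^ (((n:ℝ) + 6) / ((n:ℝ) - 6)))
          = ‖x‖ ^ (2*(b₀-1-1-1)) * (cQ n * v t ^ (((n:ℝ) + 6) / ((n:ℝ) - 6))) by ring]
      exact mul_right_inj' hF.ne'
    rw [step]
    unfold EmdenFowler
    rw [← hEF]
  constructor
  · intro H t htR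
    -- pick a point with norm exp(-t)
    have hpos : (0:ℝ) < Real.exp (-t) := Real.exp_pos _
    set x : EuclideanSpace ℝ (Fin n) :=
      Real.exp (-t) • EuclideanSpace.single (⟨0, by omega⟩ : Fin n) (1:ℝ) with hxdef
    have hxn : ‖x‖ = Real.exp (-t) := by
      rw [hxdef, norm_smul, EuclideanSpace.norm_single]
      simp [abs_of_pos hpos]
    have hx0 : x ≠ 0 := by
      intro h0
      rw [h0, norm_zero] at hxn
      exact hpos.ne' hxn.symm
    have hlt : ENNReal.ofReal ‖x‖ < R := by rw [hxn]; exact htR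
    have hteq : -Real.log ‖x‖ = t := by rw [hxn, Real.log_exp]; ring
    have := (key x hx0 (by rw [hteq]; exact htR)).1 (H x hx0 hlt)
    rwa [hteq] at this
  · intro H x hx hxR
    exact (key x hx ((hmem x hx).1 hxR)).2 (H _ ((hmem x hx).1 hxR))
end

section
/- Let n ≥ 7 be an integer, R > 0, and let u ∈ C^∞(B_R) be a positive radially symmetric solution of (−Δ)³u = c_n u^{(n+6)/(n−6)} on the full ball B_R = {x ∈ ℝⁿ : |x| < R} (so the origin is a regular point). Define v(t) = e^{−((n−6)/2)t} u(e^{−t}θ) for t > −ln R (independent of θ ∈ 𝕊^{n−1} by radial symmetry). Then the conserved radial Hamiltonian H(v)(t) = ½(v‴)² + (K₄/2)(v″)² + (K₂/2)(v′)² − (K₀/2)v² + v⁽⁵⁾v′ − v⁽⁴⁾v″ − K₄v‴v′ + (c_n(n−6)/(2n))|v|^{2n/(n−6)} is identically zero; i.e., the Pohozaev invariant of a solution with removable singularity vanishes. -/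
open Real Set Filter Metric

lemma lap_radial_s17 (n : ℕ) (R : ℝ) (g g1 g2 : ℝ → ℝ)
    (hg : ∀ r ∈ Set.Ioo (0:ℝ) R, HasDerivAt g (g1 r) r)
    (hg1 : ∀ r ∈ Set.Ioo (0:ℝ) R, HasDerivAt g1 (g2 r) r)
    (x : EuclideanSpace ℝ (Fin n)) (hx : 0 < ‖x‖) (hxR : ‖x‖ < R) :
    lap n (fun y => g ‖y‖) x = g2 ‖x‖ + ((n:ℝ) - 1) / ‖x‖ * g1 ‖x‖ := by
  set r := ‖x‖ with hr
  have hrne : r ≠ 0 := ne_of_gt hx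
  set ε : ℝ := min r (R - r) with hε
  have hεpos : 0 < ε := lt_min hx (by linarith)
  have key : ∀ i : Fin n,
      iteratedDeriv 2 (fun s : ℝ => g ‖x + s • EuclideanSpace.single i (1:ℝ)‖) 0
        = g2 r * (x i)^2/r^2 + g1 r * (1/r - (x i)^2/r^3) := by
    intro i
    set q : ℝ → ℝ := fun s => r^2 + 2*(x i)*s + s^2 with hq
    have hnorm : ∀ s : ℝ, ‖x + s • EuclideanSpace.single i (1:ℝ)‖ = Real.sqrt (q s) := by
      intro s
      have h1 : ‖x + s • EuclideanSpace.single i (1:ℝ)‖^2 = q s := by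
        rw [norm_add_sq_real]
        have h2 : (inner ℝ x (s • EuclideanSpace.single i (1:ℝ)) : ℝ) = s * x i := by
          rw [inner_smul_right]
          rw [EuclideanSpace.inner_single_right]
          simp
        rw [h2, norm_smul, EuclideanSpace.norm_single]
        simp [hq]
        ring
      rw [← h1, Real.sqrt_sq (norm_nonneg _)]
    -- bounds along the line
    have hline : ∀ s : ℝ, |s| < ε → 0 < Real.sqrt (q s) ∧ Real.sqrt (q s) < R := by
      intro s hs
      have hs1 : |s| < r := lt_of_lt_of_le hs (min_le_left _ _)
      have hs2 : |s| < R - r := lt_of_lt_of_le hs (min_le_right _ _)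
      have hnrm : ‖s • EuclideanSpace.single i (1:ℝ)‖ = |s| := by
        rw [norm_smul, EuclideanSpace.norm_single]; simp
      constructor
      · rw [← hnorm]
        have : r - |s| ≤ ‖x + s • EuclideanSpace.single i (1:ℝ)‖ := by
          have := norm_sub_norm_le x (-(s • EuclideanSpace.single i (1:ℝ)))
          simp only [norm_neg, hnrm] at this
          calc r - |s| ≤ ‖x - -(s • EuclideanSpace.single i (1:ℝ))‖ := by
                rw [hr]; simpa [hnrm] using this
            _ = ‖x + s • EuclideanSpace.single i (1:ℝ)‖ := by rw [sub_neg_eq_add]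
        linarith
      · rw [← hnorm]
        calc ‖x + s • EuclideanSpace.single i (1:ℝ)‖ ≤ r + |s| := by
              simpa [hnrm] using norm_add_le x (s • EuclideanSpace.single i (1:ℝ))
          _ < R := by linarith
    have hqpos : ∀ s : ℝ, |s| < ε → 0 < q s := by
      intro s hs
      exact Real.sqrt_pos.mp (hline s hs).1
    -- derivative of the line norm composition
    set F : ℝ → ℝ := fun s => g (Real.sqrt (q s)) with hF
    have hFeq : (fun s : ℝ => g ‖x + s • EuclideanSpace.single i (1:ℝ)‖) = F := by
      funext s; rw [hnorm]
    rw [hFeq]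
    set G : ℝ → ℝ := fun s => g1 (Real.sqrt (q s)) * ((x i + s) / Real.sqrt (q s)) with hG
    have hqd : ∀ s : ℝ, HasDerivAt q (2*(x i) + 2*s) s := by
      intro s
      have : HasDerivAt (fun s : ℝ => r^2 + 2*(x i)*s + s^2) (0 + 2*(x i)*1 + 2*s) s := by
        exact (((hasDerivAt_const s (r^2)).add ((hasDerivAt_id s).const_mul (2*(x i)))).add
          (by simpa using (hasDerivAt_pow 2 s)))
      simpa using this.congr_deriv (by ring)
    have hsq : ∀ s : ℝ, |s| < ε → HasDerivAt (fun s => Real.sqrt (q s))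
        ((x i + s) / Real.sqrt (q s)) s := by
      intro s hs
      have h0 := hqpos s hs
      have := (Real.hasDerivAt_sqrt (ne_of_gt h0)).comp s (hqd s)
      have hne : Real.sqrt (q s) ≠ 0 := ne_of_gt (hline s hs).1
      refine this.congr_deriv ?_
      field_simp
    have hFd : ∀ s : ℝ, |s| < ε → HasDerivAt F (G s) s := by
      intro s hs
      have hmem : Real.sqrt (q s) ∈ Set.Ioo (0:ℝ) R := ⟨(hline s hs).1, (hline s hs).2⟩
      exact (hg _ hmem).comp s (hsq s hs)
    -- deriv F = G near 0
    have hnhds : ∀ᶠ s in nhds (0:ℝ), |s| < ε := by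
      have : Set.Ioo (-ε) ε ∈ nhds (0:ℝ) := Ioo_mem_nhds (by linarith) hεpos
      filter_upwards [this] with s hs
      rw [abs_lt]; exact ⟨hs.1, hs.2⟩
    have hderivF : deriv F =ᶠ[nhds (0:ℝ)] G := by
      filter_upwards [hnhds] with s hs
      exact (hFd s hs).deriv
    have h0ε : |(0:ℝ)| < ε := by simpa using hεpos
    have hq0 : Real.sqrt (q 0) = r := by
      simp only [hq]
      simp
      rw [Real.sqrt_sq (le_of_lt hx)]
    -- derivative of G at 0
    have hGd : HasDerivAt G (g2 r * (x i / r) * (x i / r)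
        + g1 r * ((r - x i * (x i / r)) / r^2)) 0 := by
      have hmem0 : Real.sqrt (q 0) ∈ Set.Ioo (0:ℝ) R := ⟨(hline 0 h0ε).1, (hline 0 h0ε).2⟩
      have h1 : HasDerivAt (fun s => g1 (Real.sqrt (q s))) (g2 r * (x i / r)) 0 := by
        have := (hg1 _ hmem0).comp 0 (hsq 0 h0ε)
        simpa [hq0, Function.comp_def] using this
      have h2 : HasDerivAt (fun s : ℝ => (x i + s) / Real.sqrt (q s))
          ((1 * r - (x i + 0) * ((x i + 0) / r)) / r^2) 0 := by
        have hnum : HasDerivAt (fun s : ℝ => x i + s) 1 0 := by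
          simpa using (hasDerivAt_id (0:ℝ)).const_add (x i)
        have := hnum.div (hsq 0 h0ε) (by rw [hq0]; exact hrne)
        simpa [hq0, Pi.div_def] using this
      have := h1.mul h2
      have hval : g1 (Real.sqrt (q 0)) = g1 r := by rw [hq0]
      refine this.congr_deriv ?_
      rw [hq0]
      ring
    calc iteratedDeriv 2 F 0 = deriv (deriv F) 0 := by
          rw [iteratedDeriv_succ, iteratedDeriv_one]
      _ = deriv G 0 := hderivF.deriv_eq
      _ = _ := by
          rw [hGd.deriv]
          field_simp
  rw [lap]
  simp only [key]
  rw [Finset.sum_add_distrib]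
  have hsum : ∑ i : Fin n, (x i)^2 = r^2 := by
    have := EuclideanSpace.norm_eq x
    rw [hr, this, Real.sq_sqrt (by positivity)]
    congr 1
    funext i
    simp [Real.norm_eq_abs, sq_abs]
  have h1 : ∑ i : Fin n, g2 r * (x i)^2/r^2 = g2 r := by
    have : ∑ i : Fin n, g2 r * (x i)^2/r^2 = (g2 r/r^2) * ∑ i : Fin n, (x i)^2 := by
      rw [Finset.mul_sum]
      exact Finset.sum_congr rfl (fun i _ => by ring)
    rw [this, hsum]
    field_simp
  have h2 : ∑ i : Fin n, g1 r * (1/r - (x i)^2/r^3) = ((n:ℝ) - 1) / r * g1 r := by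
    have : ∑ i : Fin n, g1 r * (1/r - (x i)^2/r^3)
        = (n:ℝ) * (g1 r / r) - (g1 r/r^3) * ∑ i : Fin n, (x i)^2 := by
      rw [Finset.mul_sum]
      have : ∀ i : Fin n, g1 r * (1/r - (x i)^2/r^3) = g1 r / r - g1 r / r^3 * (x i)^2 :=
        fun i => by ring
      simp_rw [this]
      rw [Finset.sum_sub_distrib, Finset.sum_const, Finset.card_univ, Fintype.card_fin,
        nsmul_eq_mul]
    rw [this, hsum]
    field_simp
  rw [h1, h2]


lemma lap_congr (n : ℕ) (f h : EuclideanSpace ℝ (Fin n) → ℝ) (x : EuclideanSpace ℝ (Fin n))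
    (hfh : f =ᶠ[nhds x] h) : lap n f x = lap n h x := by
  unfold lap
  apply Finset.sum_congr rfl
  intro i _
  have hline : Continuous (fun s : ℝ => x + s • EuclideanSpace.single i (1:ℝ)) := by
    continuity
  have h0 : (fun s : ℝ => x + s • EuclideanSpace.single i (1:ℝ)) 0 = x := by simp
  have hcomp : (fun s : ℝ => f (x + s • EuclideanSpace.single i (1:ℝ)))
      =ᶠ[nhds (0:ℝ)] (fun s : ℝ => h (x + s • EuclideanSpace.single i (1:ℝ))) :=
    hfh.comp_tendsto (hline.tendsto' 0 x h0)
  simp only [iteratedDeriv_succ, iteratedDeriv_one]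
  exact (hcomp.deriv).deriv_eq

lemma hasDerivAt_cdiv_pow {f : ℝ → ℝ} {f' r : ℝ} (hf : HasDerivAt f f' r)
    (c : ℝ) (m : ℕ) (hr : r ≠ 0) :
    HasDerivAt (fun r => c / r^m * f r) (c / r^m * f' - (m:ℝ) * c / r^(m+1) * f r) r := by
  have h1 : HasDerivAt (fun r : ℝ => c / r^m) (-((m:ℝ) * c / r^(m+1))) r := by
    have h0 := ((hasDerivAt_pow m r).inv (pow_ne_zero m hr)).const_mul c
    have hfun : (fun r : ℝ => c / r^m) = fun y => c * (fun x : ℝ => x ^ m)⁻¹ y := by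
      funext y; simp [div_eq_mul_inv]
    rw [hfun]
    refine h0.congr_deriv ?_
    rcases m with _ | m
    · simp
    · field_simp
      rw [Nat.add_sub_cancel]
      ring
  have := h1.mul hf
  refine this.congr_deriv ?_
  simp only [div_eq_mul_inv]
  ring

set_option maxHeartbeats 1600000 in
lemma negLapCubed_radial (n : ℕ) (R : ℝ) (d : ℕ → ℝ → ℝ)
    (hd : ∀ j, ∀ r ∈ Set.Ioo (0:ℝ) R, HasDerivAt (d j) (d (j+1) r) r)
    (u : EuclideanSpace ℝ (Fin n) → ℝ) (hu_eq : ∀ y, u y = d 0 ‖y‖)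
    (x : EuclideanSpace ℝ (Fin n)) (hx : 0 < ‖x‖) (hxR : ‖x‖ < R) :
    negLapCubed n u x =
      -(d 6 ‖x‖ + (3*(n:ℝ)-3)/‖x‖^1 * d 5 ‖x‖ + (3*(n:ℝ)^2-12*(n:ℝ)+9)/‖x‖^2 * d 4 ‖x‖
        + ((n:ℝ)^3-12*(n:ℝ)^2+35*(n:ℝ)-24)/‖x‖^3 * d 3 ‖x‖
        + (-3*(n:ℝ)^3+27*(n:ℝ)^2-69*(n:ℝ)+45)/‖x‖^4 * d 2 ‖x‖
        + (3*(n:ℝ)^3-27*(n:ℝ)^2+69*(n:ℝ)-45)/‖x‖^5 * d 1 ‖x‖) := by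
  obtain ⟨c, hc⟩ : ∃ c : ℝ, (n:ℝ) = c := ⟨_, rfl⟩
  rw [hc]
  have hψ₁d : ∀ r ∈ Set.Ioo (0:ℝ) R, HasDerivAt (fun r : ℝ => d 2 r + (c-1)/r^1 * d 1 r) ((fun r : ℝ => d 3 r + (c-1)/r^1 * d 2 r + (-(c-1))/r^2 * d 1 r) r) r := by
    intro r hr
    have hrne : r ≠ 0 := ne_of_gt hr.1
    have h := (hd 2 r hr).add (hasDerivAt_cdiv_pow (hd 1 r hr) (c-1) 1 hrne)
    refine h.congr_deriv ?_
    field_simp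
    ring
  have ha1d : ∀ r ∈ Set.Ioo (0:ℝ) R, HasDerivAt (fun r : ℝ => d 3 r + (c-1)/r^1 * d 2 r + (-(c-1))/r^2 * d 1 r) ((fun r : ℝ => d 4 r + (c-1)/r^1 * d 3 r + (-2*(c-1))/r^2 * d 2 r + (2*(c-1))/r^3 * d 1 r) r) r := by
    intro r hr
    have hrne : r ≠ 0 := ne_of_gt hr.1
    have h := ((hd 3 r hr).add (hasDerivAt_cdiv_pow (hd 2 r hr) (c-1) 1 hrne)).add
      (hasDerivAt_cdiv_pow (hd 1 r hr) (-(c-1)) 2 hrne)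
    refine h.congr_deriv ?_
    field_simp
    ring
  have hψ₂d : ∀ r ∈ Set.Ioo (0:ℝ) R, HasDerivAt (fun r : ℝ => d 4 r + (2*c-2)/r^1 * d 3 r + (c^2-4*c+3)/r^2 * d 2 r + (-c^2+4*c-3)/r^3 * d 1 r) ((fun r : ℝ => d 5 r + (2*c-2)/r^1 * d 4 r + (c^2-6*c+5)/r^2 * d 3 r + (-3*c^2+12*c-9)/r^3 * d 2 r + (3*c^2-12*c+9)/r^4 * d 1 r) r) r := by
    intro r hr
    have hrne : r ≠ 0 := ne_of_gt hr.1
    have h := (((hd 4 r hr).add (hasDerivAt_cdiv_pow (hd 3 r hr) (2*c-2) 1 hrne)).add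
      (hasDerivAt_cdiv_pow (hd 2 r hr) (c^2-4*c+3) 2 hrne)).add
      (hasDerivAt_cdiv_pow (hd 1 r hr) (-c^2+4*c-3) 3 hrne)
    refine h.congr_deriv ?_
    field_simp
    ring
  have hb1d : ∀ r ∈ Set.Ioo (0:ℝ) R, HasDerivAt (fun r : ℝ => d 5 r + (2*c-2)/r^1 * d 4 r + (c^2-6*c+5)/r^2 * d 3 r + (-3*c^2+12*c-9)/r^3 * d 2 r + (3*c^2-12*c+9)/r^4 * d 1 r) ((fun r : ℝ => d 6 r + (2*c-2)/r^1 * d 5 r + (c^2-8*c+7)/r^2 * d 4 r + (-5*c^2+24*c-19)/r^3 * d 3 r + (12*c^2-48*c+36)/r^4 * d 2 r + (-12*c^2+48*c-36)/r^5 * d 1 r) r) r := by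
    intro r hr
    have hrne : r ≠ 0 := ne_of_gt hr.1
    have h := ((((hd 5 r hr).add (hasDerivAt_cdiv_pow (hd 4 r hr) (2*c-2) 1 hrne)).add
      (hasDerivAt_cdiv_pow (hd 3 r hr) (c^2-6*c+5) 2 hrne)).add
      (hasDerivAt_cdiv_pow (hd 2 r hr) (-3*c^2+12*c-9) 3 hrne)).add
      (hasDerivAt_cdiv_pow (hd 1 r hr) (3*c^2-12*c+9) 4 hrne)
    refine h.congr_deriv ?_
    field_simp
    ring
  have hu_fun : u = fun y => d 0 ‖y‖ := funext hu_eq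
  have hlap1 : ∀ y : EuclideanSpace ℝ (Fin n), 0 < ‖y‖ → ‖y‖ < R →
      lap n u y = (fun r : ℝ => d 2 r + (c-1)/r^1 * d 1 r) ‖y‖ := by
    intro y hy hyR
    rw [hu_fun, lap_radial_s17 n R (d 0) (d 1) (d 2) (hd 0) (hd 1) y hy hyR, hc]
    have hyne : ‖y‖ ≠ 0 := ne_of_gt hy
    beta_reduce
    field_simp
  have hopen : IsOpen {y : EuclideanSpace ℝ (Fin n) | 0 < ‖y‖ ∧ ‖y‖ < R} :=
    IsOpen.inter (isOpen_lt continuous_const continuous_norm)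
      (isOpen_lt continuous_norm continuous_const)
  have hmem : {y : EuclideanSpace ℝ (Fin n) | 0 < ‖y‖ ∧ ‖y‖ < R} ∈ nhds x :=
    hopen.mem_nhds ⟨hx, hxR⟩
  have hlap2 : ∀ y : EuclideanSpace ℝ (Fin n), 0 < ‖y‖ → ‖y‖ < R →
      lap n (lap n u) y = (fun r : ℝ => d 4 r + (2*c-2)/r^1 * d 3 r + (c^2-4*c+3)/r^2 * d 2 r + (-c^2+4*c-3)/r^3 * d 1 r) ‖y‖ := by
    intro y hy hyR
    have hmem' : {z : EuclideanSpace ℝ (Fin n) | 0 < ‖z‖ ∧ ‖z‖ < R} ∈ nhds y :=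
      hopen.mem_nhds ⟨hy, hyR⟩
    have hev : lap n u =ᶠ[nhds y] (fun z => (fun r : ℝ => d 2 r + (c-1)/r^1 * d 1 r) ‖z‖) := by
      filter_upwards [hmem'] with z hz
      exact hlap1 z hz.1 hz.2
    rw [lap_congr n _ _ y hev,
      lap_radial_s17 n R (fun r : ℝ => d 2 r + (c-1)/r^1 * d 1 r) (fun r : ℝ => d 3 r + (c-1)/r^1 * d 2 r + (-(c-1))/r^2 * d 1 r) (fun r : ℝ => d 4 r + (c-1)/r^1 * d 3 r + (-2*(c-1))/r^2 * d 2 r + (2*(c-1))/r^3 * d 1 r) hψ₁d ha1d y hy hyR, hc]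
    have hyne : ‖y‖ ≠ 0 := ne_of_gt hy
    beta_reduce
    field_simp
    ring
  have hev2 : lap n (lap n u) =ᶠ[nhds x] (fun z => (fun r : ℝ => d 4 r + (2*c-2)/r^1 * d 3 r + (c^2-4*c+3)/r^2 * d 2 r + (-c^2+4*c-3)/r^3 * d 1 r) ‖z‖) := by
    filter_upwards [hmem] with z hz
    exact hlap2 z hz.1 hz.2
  have hlap3 : lap n (lap n (lap n u)) x
      = (fun r : ℝ => d 6 r + (2*c-2)/r^1 * d 5 r + (c^2-8*c+7)/r^2 * d 4 r + (-5*c^2+24*c-19)/r^3 * d 3 r + (12*c^2-48*c+36)/r^4 * d 2 r + (-12*c^2+48*c-36)/r^5 * d 1 r) ‖x‖ + (c-1)/‖x‖ * (fun r : ℝ => d 5 r + (2*c-2)/r^1 * d 4 r + (c^2-6*c+5)/r^2 * d 3 r + (-3*c^2+12*c-9)/r^3 * d 2 r + (3*c^2-12*c+9)/r^4 * d 1 r) ‖x‖ := by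
    rw [lap_congr n _ _ x hev2,
      lap_radial_s17 n R (fun r : ℝ => d 4 r + (2*c-2)/r^1 * d 3 r + (c^2-4*c+3)/r^2 * d 2 r + (-c^2+4*c-3)/r^3 * d 1 r) (fun r : ℝ => d 5 r + (2*c-2)/r^1 * d 4 r + (c^2-6*c+5)/r^2 * d 3 r + (-3*c^2+12*c-9)/r^3 * d 2 r + (3*c^2-12*c+9)/r^4 * d 1 r) (fun r : ℝ => d 6 r + (2*c-2)/r^1 * d 5 r + (c^2-8*c+7)/r^2 * d 4 r + (-5*c^2+24*c-19)/r^3 * d 3 r + (12*c^2-48*c+36)/r^4 * d 2 r + (-12*c^2+48*c-36)/r^5 * d 1 r) hψ₂d hb1d x hx hxR, hc]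
  rw [negLapCubed, hlap3]
  have hxne : ‖x‖ ≠ 0 := ne_of_gt hx
  beta_reduce
  field_simp
  ring

set_option maxHeartbeats 2000000 in
/-- vanishing of the Pohozaev invariant for solutions with removable singularity.
If `u` is a smooth positive radially symmetric solution of `(−Δ)³u = c_n u^((n+6)/(n−6))` on the
full ball `B_R` and `v(t) = e^(−((n−6)/2)t) u(e^(−t)θ)` is its Emden–Fowler transform, then the
radial Hamiltonian of `v` vanishes identically on `(−ln R, ∞)`. -/
theorem pohozaev_vanishes_removable (n : ℕ) (hn : 7 ≤ n) (R : ℝ) (hR : 0 < R)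
    (u : EuclideanSpace ℝ (Fin n) → ℝ)
    (hu : ContDiffOn ℝ (⊤ : ℕ∞) u (Metric.ball (0 : EuclideanSpace ℝ (Fin n)) R))
    (hpos : ∀ x ∈ Metric.ball (0 : EuclideanSpace ℝ (Fin n)) R, 0 < u x)
    (hrad : ∀ x y : EuclideanSpace ℝ (Fin n), ‖x‖ = ‖y‖ → u x = u y)
    (hsol : ∀ x ∈ Metric.ball (0 : EuclideanSpace ℝ (Fin n)) R, QcurvEq n u x) :
    ∀ t : ℝ, -Real.log R < t →
      Ham n (cQ n)
        (fun s : ℝ => Real.exp (-(((n:ℝ) - 6) / 2) * s) *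
          u (Real.exp (-s) • EuclideanSpace.single (⟨0, by omega⟩ : Fin n) (1:ℝ))) t = 0 := by
  intro t ht
  have hn7 : (7:ℝ) ≤ (n:ℝ) := by exact_mod_cast hn
  set c : ℝ := (n:ℝ) with hcdef
  have hc6 : c - 6 ≠ 0 := by rw [hcdef]; intro h; nlinarith
  have hc0 : c ≠ 0 := by rw [hcdef]; intro h; nlinarith
  set θ : EuclideanSpace ℝ (Fin n) := EuclideanSpace.single (⟨0, by omega⟩ : Fin n) (1:ℝ)
    with hθdef
  have hθ : ‖θ‖ = 1 := by rw [hθdef, EuclideanSpace.norm_single]; simp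
  set φ : ℝ → ℝ := fun r => u (r • θ) with hφdef
  show Ham n (cQ n) (fun s : ℝ => Real.exp (-((c - 6) / 2) * s) * φ (Real.exp (-s))) t = 0
  set v : ℝ → ℝ := fun s : ℝ => Real.exp (-((c - 6) / 2) * s) * φ (Real.exp (-s)) with hvdef
  -- u is the radial profile of φ
  have hu_eq : ∀ y, u y = φ ‖y‖ := by
    intro y
    apply hrad
    rw [norm_smul, hθ]
    simp [abs_of_nonneg (norm_nonneg y)]
  -- smoothness of φ
  have hmap : Set.MapsTo (fun r : ℝ => r • θ) (Set.Ioo (-R) R)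
      (Metric.ball (0 : EuclideanSpace ℝ (Fin n)) R) := by
    intro r hr
    rw [Metric.mem_ball, dist_zero_right, norm_smul, hθ, mul_one]
    rw [Real.norm_eq_abs, abs_lt]
    exact ⟨hr.1, hr.2⟩
  have hφs : ContDiffOn ℝ (⊤ : ℕ∞) φ (Set.Ioo (-R) R) := by
    apply hu.comp _ hmap
    exact (contDiff_id.smul contDiff_const).contDiffOn
  set d : ℕ → ℝ → ℝ := fun j => iteratedDeriv j φ with hddef
  have hd0 : ∀ r, d 0 r = φ r := by intro r; rw [hddef]; simp [iteratedDeriv_zero]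
  have hds : ∀ j, ContDiffOn ℝ (⊤ : ℕ∞) (d j) (Set.Ioo (-R) R) := by
    intro j
    induction j with
    | zero => simpa [hddef, iteratedDeriv_zero] using hφs
    | succ k ih =>
      have : d (k+1) = deriv (d k) := by rw [hddef]; simp [iteratedDeriv_succ]
      rw [this]
      exact ih.deriv_of_isOpen isOpen_Ioo (by simp)
  have hd : ∀ j, ∀ r ∈ Set.Ioo (-R) R, HasDerivAt (d j) (d (j+1) r) r := by
    intro j r hr
    have hdiff : DifferentiableAt ℝ (d j) r :=
      ((hds j).differentiableOn (by simp)).differentiableAt (isOpen_Ioo.mem_nhds hr)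
    have h1 := hdiff.hasDerivAt
    have h2 : d (j+1) r = deriv (d j) r := by rw [hddef]; simp [iteratedDeriv_succ]
    rw [h2]
    exact h1
  have hsub : Set.Ioo (0:ℝ) R ⊆ Set.Ioo (-R) R := fun r hr => ⟨by linarith [hr.1], hr.2⟩
  have hd' : ∀ j, ∀ r ∈ Set.Ioo (0:ℝ) R, HasDerivAt (d j) (d (j+1) r) r :=
    fun j r hr => hd j r (hsub hr)
  -- the radial ODE from the PDE
  have hp : (((n:ℝ) + 6) / ((n:ℝ) - 6)) = (c+6)/(c-6) := by rw [hcdef]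
  have key_r : ∀ r ∈ Set.Ioo (0:ℝ) R, cQ n * (φ r) ^ ((c+6)/(c-6)) =
      -(d 6 r + (3*c-3)/r^1 * d 5 r + (3*c^2-12*c+9)/r^2 * d 4 r
        + (c^3-12*c^2+35*c-24)/r^3 * d 3 r
        + (-3*c^3+27*c^2-69*c+45)/r^4 * d 2 r
        + (3*c^3-27*c^2+69*c-45)/r^5 * d 1 r) := by
    intro r hr
    set x : EuclideanSpace ℝ (Fin n) := r • θ with hxdef
    have hxn : ‖x‖ = r := by
      rw [hxdef, norm_smul, hθ, mul_one, Real.norm_eq_abs, abs_of_pos hr.1]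
    have hxball : x ∈ Metric.ball (0 : EuclideanSpace ℝ (Fin n)) R := by
      rw [Metric.mem_ball, dist_zero_right, hxn]; exact hr.2
    have hQ := hsol x hxball
    rw [QcurvEq] at hQ
    have hNL := negLapCubed_radial n R d hd' u
      (fun y => by rw [hu_eq y, hd0]) x (by rw [hxn]; exact hr.1) (by rw [hxn]; exact hr.2)
    rw [hNL] at hQ
    rw [hu_eq x, hxn] at hQ
    rw [← hcdef] at hQ
    exact hQ.symm
  -- go to cylindrical coordinates
  set γ : ℝ := (c-6)/2 with hγdef
  have hγpos : 0 < γ := by rw [hγdef]; nlinarith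
  set P : ℕ → ℝ → ℝ := fun j s => Real.exp (-(γ+(j:ℝ))*s) * d j (Real.exp (-s)) with hPdef
  have hrt : ∀ s : ℝ, -Real.log R < s → Real.exp (-s) ∈ Set.Ioo (0:ℝ) R := by
    intro s hs
    refine ⟨Real.exp_pos _, ?_⟩
    rw [← Real.exp_log hR]
    exact Real.exp_lt_exp.mpr (by linarith)
  have hP : ∀ (j : ℕ) (s : ℝ), -Real.log R < s →
      HasDerivAt (P j) (-(γ+(j:ℝ)) * P j s - P (j+1) s) s := by
    intro j s hs
    have h1 : HasDerivAt (fun s : ℝ => Real.exp (-(γ+(j:ℝ))*s))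
        (-(γ+(j:ℝ)) * Real.exp (-(γ+(j:ℝ))*s)) s := by
      have h0 : HasDerivAt (fun s : ℝ => -(γ+(j:ℝ))*s) (-(γ+(j:ℝ))) s := by
        simpa using (hasDerivAt_id s).const_mul (-(γ+(j:ℝ)))
      simpa [mul_comm] using h0.exp
    have hexp : HasDerivAt (fun s : ℝ => Real.exp (-s)) (-Real.exp (-s)) s := by
      have h0 : HasDerivAt (fun s : ℝ => -s) (-1 : ℝ) s := (hasDerivAt_id s).neg
      simpa using h0.exp
    have h2 : HasDerivAt (fun s : ℝ => d j (Real.exp (-s)))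
        (d (j+1) (Real.exp (-s)) * (-Real.exp (-s))) s := by
      have := (hd' j _ (hrt s hs)).comp s hexp; exact this
    have h3 := h1.mul h2
    refine h3.congr_deriv ?_
    have hee : Real.exp (-(γ+((j:ℝ)+1))*s) = Real.exp (-(γ+(j:ℝ))*s) * Real.exp (-s) := by
      rw [← Real.exp_add]; congr 1; ring
    rw [hPdef]
    push_cast
    rw [hee]
    ring
  set V0 : ℝ → ℝ := fun s => P 0 s with hV0def
  set V1 : ℝ → ℝ := fun s => (-γ) * P 0 s + (-1) * P 1 s with hV1def
  set V2 : ℝ → ℝ := fun s => (γ^2) * P 0 s + (2*γ + 1) * P 1 s + P 2 s with hV2def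
  set V3 : ℝ → ℝ := fun s => (-γ^3) * P 0 s + (-3*γ^2 - 3*γ - 1) * P 1 s + (-3*γ - 3) * P 2 s + (-1) * P 3 s with hV3def
  set V4 : ℝ → ℝ := fun s => (γ^4) * P 0 s + (4*γ^3 + 6*γ^2 + 4*γ + 1) * P 1 s + (6*γ^2 + 12*γ + 7) * P 2 s + (4*γ + 6) * P 3 s + P 4 s with hV4def
  set V5 : ℝ → ℝ := fun s => (-γ^5) * P 0 s + (-5*γ^4 - 10*γ^3 - 10*γ^2 - 5*γ - 1) * P 1 s + (-10*γ^3 - 30*γ^2 - 35*γ - 15) * P 2 s + (-10*γ^2 - 30*γ - 25) * P 3 s + (-5*γ - 10) * P 4 s + (-1) * P 5 s with hV5def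
  set V6 : ℝ → ℝ := fun s => (γ^6) * P 0 s + (6*γ^5 + 15*γ^4 + 20*γ^3 + 15*γ^2 + 6*γ + 1) * P 1 s + (15*γ^4 + 60*γ^3 + 105*γ^2 + 90*γ + 31) * P 2 s + (20*γ^3 + 90*γ^2 + 150*γ + 90) * P 3 s + (15*γ^2 + 60*γ + 65) * P 4 s + (6*γ + 15) * P 5 s + P 6 s with hV6def
  have hVd0 : ∀ s : ℝ, -Real.log R < s → HasDerivAt V0 (V1 s) s := by
    intro s hs
    have h := (hP 0 s hs)
    refine h.congr_deriv ?_
    simp only [hV1def]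
    push_cast
    ring
  have hVd1 : ∀ s : ℝ, -Real.log R < s → HasDerivAt V1 (V2 s) s := by
    intro s hs
    have h := (((hP 0 s hs).const_mul (-γ : ℝ)).add ((hP 1 s hs).const_mul (-1 : ℝ)))
    refine h.congr_deriv ?_
    simp only [hV2def]
    push_cast
    ring
  have hVd2 : ∀ s : ℝ, -Real.log R < s → HasDerivAt V2 (V3 s) s := by
    intro s hs
    have h := ((((hP 0 s hs).const_mul (γ^2 : ℝ)).add ((hP 1 s hs).const_mul (2*γ + 1 : ℝ))).add (hP 2 s hs))
    refine h.congr_deriv ?_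
    simp only [hV3def]
    push_cast
    ring
  have hVd3 : ∀ s : ℝ, -Real.log R < s → HasDerivAt V3 (V4 s) s := by
    intro s hs
    have h := (((((hP 0 s hs).const_mul (-γ^3 : ℝ)).add ((hP 1 s hs).const_mul (-3*γ^2 - 3*γ - 1 : ℝ))).add ((hP 2 s hs).const_mul (-3*γ - 3 : ℝ))).add ((hP 3 s hs).const_mul (-1 : ℝ)))
    refine h.congr_deriv ?_
    simp only [hV4def]
    push_cast
    ring
  have hVd4 : ∀ s : ℝ, -Real.log R < s → HasDerivAt V4 (V5 s) s := by
    intro s hs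
    have h := ((((((hP 0 s hs).const_mul (γ^4 : ℝ)).add ((hP 1 s hs).const_mul (4*γ^3 + 6*γ^2 + 4*γ + 1 : ℝ))).add ((hP 2 s hs).const_mul (6*γ^2 + 12*γ + 7 : ℝ))).add ((hP 3 s hs).const_mul (4*γ + 6 : ℝ))).add (hP 4 s hs))
    refine h.congr_deriv ?_
    simp only [hV5def]
    push_cast
    ring
  have hVd5 : ∀ s : ℝ, -Real.log R < s → HasDerivAt V5 (V6 s) s := by
    intro s hs
    have h := (((((((hP 0 s hs).const_mul (-γ^5 : ℝ)).add ((hP 1 s hs).const_mul (-5*γ^4 - 10*γ^3 - 10*γ^2 - 5*γ - 1 : ℝ))).add ((hP 2 s hs).const_mul (-10*γ^3 - 30*γ^2 - 35*γ - 15 : ℝ))).add ((hP 3 s hs).const_mul (-10*γ^2 - 30*γ - 25 : ℝ))).add ((hP 4 s hs).const_mul (-5*γ - 10 : ℝ))).add ((hP 5 s hs).const_mul (-1 : ℝ)))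
    refine h.congr_deriv ?_
    simp only [hV6def]
    push_cast
    ring
  have hiter0 : ∀ s, v s = V0 s := by
    intro s
    simp only [hvdef, hV0def, hPdef, hγdef, hd0]
    norm_num
  have hit1 : ∀ s : ℝ, -Real.log R < s → deriv v s = V1 s := by
    intro s hs
    have hveq : v = V0 := funext hiter0
    rw [hveq]
    exact (hVd0 s hs).deriv
  have hit2 : ∀ s : ℝ, -Real.log R < s → iteratedDeriv 2 v s = V2 s := by
    intro s hs
    rw [show (2:ℕ) = 1 + 1 from rfl, iteratedDeriv_succ, iteratedDeriv_one]
    have hev : deriv v =ᶠ[nhds s] V1 := by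
      filter_upwards [Ioi_mem_nhds hs] with y hy
      exact hit1 y hy
    rw [hev.deriv_eq]
    exact (hVd1 s hs).deriv
  have hit3 : ∀ s : ℝ, -Real.log R < s → iteratedDeriv 3 v s = V3 s := by
    intro s hs
    rw [show (3:ℕ) = 2 + 1 from rfl, iteratedDeriv_succ]
    have hev : iteratedDeriv 2 v =ᶠ[nhds s] V2 := by
      filter_upwards [Ioi_mem_nhds hs] with y hy
      exact hit2 y hy
    rw [hev.deriv_eq]
    exact (hVd2 s hs).deriv
  have hit4 : ∀ s : ℝ, -Real.log R < s → iteratedDeriv 4 v s = V4 s := by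
    intro s hs
    rw [show (4:ℕ) = 3 + 1 from rfl, iteratedDeriv_succ]
    have hev : iteratedDeriv 3 v =ᶠ[nhds s] V3 := by
      filter_upwards [Ioi_mem_nhds hs] with y hy
      exact hit3 y hy
    rw [hev.deriv_eq]
    exact (hVd3 s hs).deriv
  have hit5 : ∀ s : ℝ, -Real.log R < s → iteratedDeriv 5 v s = V5 s := by
    intro s hs
    rw [show (5:ℕ) = 4 + 1 from rfl, iteratedDeriv_succ]
    have hev : iteratedDeriv 4 v =ᶠ[nhds s] V4 := by
      filter_upwards [Ioi_mem_nhds hs] with y hy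
      exact hit4 y hy
    rw [hev.deriv_eq]
    exact (hVd4 s hs).deriv
  have hit6 : ∀ s : ℝ, -Real.log R < s → iteratedDeriv 6 v s = V6 s := by
    intro s hs
    rw [show (6:ℕ) = 5 + 1 from rfl, iteratedDeriv_succ]
    have hev : iteratedDeriv 5 v =ᶠ[nhds s] V5 := by
      filter_upwards [Ioi_mem_nhds hs] with y hy
      exact hit5 y hy
    rw [hev.deriv_eq]
    exact (hVd5 s hs).deriv
  -- the Emden-Fowler equation
  have hq6 : ∀ (j : ℕ) (s : ℝ), Real.exp (-(γ+(j:ℝ))*s)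
      = Real.exp (-γ*s) * Real.exp (-s) ^ j := by
    intro j s
    rw [← Real.exp_nat_mul, ← Real.exp_add]
    congr 1
    ring
  have hballmem : ∀ s : ℝ, -Real.log R < s →
      Real.exp (-s) • θ ∈ Metric.ball (0 : EuclideanSpace ℝ (Fin n)) R := by
    intro s hs
    rw [Metric.mem_ball, dist_zero_right, norm_smul, hθ, mul_one, Real.norm_eq_abs,
      abs_of_pos (Real.exp_pos _)]
    exact (hrt s hs).2
  have hφpos : ∀ s : ℝ, -Real.log R < s → 0 < φ (Real.exp (-s)) := by
    intro s hs
    exact hpos _ (hballmem s hs)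
  have hV0pos : ∀ s : ℝ, -Real.log R < s → 0 < V0 s := by
    intro s hs
    have h1 := hφpos s hs
    simp only [hV0def, hPdef, hd0]
    positivity
  have hEF : ∀ s : ℝ, -Real.log R < s →
      -(V6 s) + K4c n * V4 s - K2c n * V2 s + K0c n * V0 s
        = cQ n * (V0 s) ^ ((c+6)/(c-6)) := by
    intro s hs
    have hr := hrt s hs
    have hφp := hφpos s hs
    have hV0s : V0 s = Real.exp (-γ*s) * φ (Real.exp (-s)) := by
      simp only [hV0def, hPdef, hd0]
      norm_num
    have hexpeq : Real.exp (-γ*s) ^ ((c+6)/(c-6)) = Real.exp (-(γ+6)*s) := by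
      rw [Real.rpow_def_of_pos (Real.exp_pos _), Real.log_exp]
      congr 1
      rw [hγdef]
      field_simp
      ring
    have hrpow : (V0 s) ^ ((c+6)/(c-6))
        = Real.exp (-(γ+6)*s) * φ (Real.exp (-s)) ^ ((c+6)/(c-6)) := by
      rw [hV0s, Real.mul_rpow (le_of_lt (Real.exp_pos _)) (le_of_lt hφp), hexpeq]
    have hkey := key_r _ hr
    have hRHS : cQ n * (V0 s) ^ ((c+6)/(c-6))
        = Real.exp (-(γ+6)*s) * -(d 6 (Real.exp (-s))
          + (3*c-3)/(Real.exp (-s))^1 * d 5 (Real.exp (-s))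
          + (3*c^2-12*c+9)/(Real.exp (-s))^2 * d 4 (Real.exp (-s))
          + (c^3-12*c^2+35*c-24)/(Real.exp (-s))^3 * d 3 (Real.exp (-s))
          + (-3*c^3+27*c^2-69*c+45)/(Real.exp (-s))^4 * d 2 (Real.exp (-s))
          + (3*c^3-27*c^2+69*c-45)/(Real.exp (-s))^5 * d 1 (Real.exp (-s))) := by
      rw [hrpow, ← hkey]
      ring
    rw [hRHS]
    have hq66 : Real.exp (-(γ+6)*s) = Real.exp (-γ*s) * Real.exp (-s) ^ (6:ℕ) := by
      have h66 := hq6 6 s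
      push_cast at h66
      exact h66
    simp only [hV6def, hV4def, hV2def, hV0def, hPdef, hq6, hq66]
    have hXne : Real.exp (-s) ≠ 0 := Real.exp_ne_zero _
    have hEne : Real.exp (-γ*s) ≠ 0 := Real.exp_ne_zero _
    simp only [K4c, K2c, K0c, ← hcdef, hγdef]
    push_cast
    field_simp
    ring
  -- the Hamiltonian in V-coordinates
  set q : ℝ := 2*c/(c-6) with hqdef
  have hcgt : (6:ℝ) < c := by rw [hcdef]; nlinarith
  have hqpos : 0 < q := by rw [hqdef]; apply div_pos <;> nlinarith
  set G : ℝ → ℝ := fun s => (1/2) * (V3 s)^2 + (K4c n / 2) * (V2 s)^2 + (K2c n / 2) * (V1 s)^2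
      - (K0c n / 2) * (V0 s)^2 + V5 s * V1 s - V4 s * V2 s - K4c n * V3 s * V1 s
      + ((c - 6) * cQ n / (2 * c)) * (V0 s) ^ q with hGdef
  have hHamG : ∀ s : ℝ, -Real.log R < s → Ham n (cQ n) v s = G s := by
    intro s hs
    simp only [Ham]
    rw [hit3 s hs, hit2 s hs, hit1 s hs, hit5 s hs, hit4 s hs, hiter0 s,
      abs_of_pos (hV0pos s hs)]
  have hq1 : q - 1 = (c+6)/(c-6) := by rw [hqdef]; field_simp; ring
  have hGd : ∀ s : ℝ, -Real.log R < s → HasDerivAt G 0 s := by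
    intro s hs
    have hrp : HasDerivAt (fun y => (V0 y) ^ q) (V1 s * q * (V0 s) ^ (q - 1)) s :=
      (hVd0 s hs).rpow_const (Or.inl (ne_of_gt (hV0pos s hs)))
    have t1 := ((hVd3 s hs).pow 2).const_mul (1/2 : ℝ)
    have t2 := ((hVd2 s hs).pow 2).const_mul (K4c n / 2)
    have t3 := ((hVd1 s hs).pow 2).const_mul (K2c n / 2)
    have t4 := ((hVd0 s hs).pow 2).const_mul (K0c n / 2)
    have t5 := (hVd5 s hs).mul (hVd1 s hs)
    have t6 := (hVd4 s hs).mul (hVd2 s hs)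
    have t7 := ((hVd3 s hs).const_mul (K4c n)).mul (hVd1 s hs)
    have t8 := hrp.const_mul ((c - 6) * cQ n / (2 * c))
    have hG' := ((((((t1.add t2).add t3).sub t4).add t5).sub t6).sub t7).add t8
    have hD : HasDerivAt G (V1 s * (V6 s + K2c n * V2 s - K0c n * V0 s - K4c n * V4 s
        + cQ n * (V0 s) ^ ((c+6)/(c-6)))) s := by
      refine hG'.congr_deriv ?_
      rw [hq1]
      simp only [hqdef]
      field_simp
      ring
    refine hD.congr_deriv ?_
    have hE := hEF s hs
    linear_combination (-(V1 s)) * hE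
  -- constancy of G
  have hconst : ∀ s : ℝ, -Real.log R < s → t ≤ s → G s = G t := by
    intro s hs hts
    have hcont : ContinuousOn G (Set.Icc t s) := by
      intro y hy
      exact ((hGd y (lt_of_lt_of_le ht hy.1)).continuousAt).continuousWithinAt
    have hderiv : ∀ y ∈ Set.Ico t s, HasDerivWithinAt G 0 (Set.Ici y) y := by
      intro y hy
      exact (hGd y (lt_of_lt_of_le ht hy.1)).hasDerivWithinAt
    exact constant_of_has_deriv_right_zero hcont hderiv s (Set.right_mem_Icc.mpr hts)
  -- limits of the P j at +infinity
  have hPlim : ∀ j : ℕ, Tendsto (P j) atTop (nhds 0) := by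
    intro j
    have h1 : Tendsto (fun s : ℝ => Real.exp (-(γ+(j:ℝ))*s)) atTop (nhds 0) := by
      apply Real.tendsto_exp_atBot.comp
      have hjpos : 0 < γ + (j:ℝ) := by
        have : (0:ℝ) ≤ (j:ℝ) := Nat.cast_nonneg j
        linarith
      have hmulA : Tendsto (fun s : ℝ => (γ+(j:ℝ)) * s) atTop atTop :=
        Tendsto.const_mul_atTop hjpos tendsto_id
      have h2 : Tendsto (fun s : ℝ => -((γ+(j:ℝ))*s)) atTop atBot :=
        tendsto_neg_atTop_atBot.comp hmulA
      exact h2.congr (fun s => by ring)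
    have h2 : Tendsto (fun s : ℝ => d j (Real.exp (-s))) atTop (nhds (d j 0)) := by
      have hcj : ContinuousAt (d j) 0 :=
        ((hds j).continuousOn).continuousAt (isOpen_Ioo.mem_nhds ⟨by linarith, hR⟩)
      apply hcj.tendsto.comp
      exact Real.tendsto_exp_atBot.comp tendsto_neg_atTop_atBot
    have h3 := h1.mul h2
    have h4 : Tendsto (fun s : ℝ => Real.exp (-(γ+(j:ℝ))*s) * d j (Real.exp (-s)))
        atTop (nhds 0) := by simpa only [zero_mul] using h3
    exact h4
  have hVl0 : Tendsto V0 atTop (nhds 0) := by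
    have hbig := (hPlim 0)
    have hbig2 := by simpa only [mul_zero, add_zero, zero_add] using hbig
    exact hbig2
  have hVl1 : Tendsto V1 atTop (nhds 0) := by
    have hbig := (((hPlim 0).const_mul (-γ : ℝ)).add ((hPlim 1).const_mul (-1 : ℝ)))
    have hbig2 := by simpa only [mul_zero, add_zero, zero_add] using hbig
    exact hbig2
  have hVl2 : Tendsto V2 atTop (nhds 0) := by
    have hbig := ((((hPlim 0).const_mul (γ^2 : ℝ)).add ((hPlim 1).const_mul (2*γ + 1 : ℝ))).add (hPlim 2))
    have hbig2 := by simpa only [mul_zero, add_zero, zero_add] using hbig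
    exact hbig2
  have hVl3 : Tendsto V3 atTop (nhds 0) := by
    have hbig := (((((hPlim 0).const_mul (-γ^3 : ℝ)).add ((hPlim 1).const_mul (-3*γ^2 - 3*γ - 1 : ℝ))).add ((hPlim 2).const_mul (-3*γ - 3 : ℝ))).add ((hPlim 3).const_mul (-1 : ℝ)))
    have hbig2 := by simpa only [mul_zero, add_zero, zero_add] using hbig
    exact hbig2
  have hVl4 : Tendsto V4 atTop (nhds 0) := by
    have hbig := ((((((hPlim 0).const_mul (γ^4 : ℝ)).add ((hPlim 1).const_mul (4*γ^3 + 6*γ^2 + 4*γ + 1 : ℝ))).add ((hPlim 2).const_mul (6*γ^2 + 12*γ + 7 : ℝ))).add ((hPlim 3).const_mul (4*γ + 6 : ℝ))).add (hPlim 4))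
    have hbig2 := by simpa only [mul_zero, add_zero, zero_add] using hbig
    exact hbig2
  have hVl5 : Tendsto V5 atTop (nhds 0) := by
    have hbig := (((((((hPlim 0).const_mul (-γ^5 : ℝ)).add ((hPlim 1).const_mul (-5*γ^4 - 10*γ^3 - 10*γ^2 - 5*γ - 1 : ℝ))).add ((hPlim 2).const_mul (-10*γ^3 - 30*γ^2 - 35*γ - 15 : ℝ))).add ((hPlim 3).const_mul (-10*γ^2 - 30*γ - 25 : ℝ))).add ((hPlim 4).const_mul (-5*γ - 10 : ℝ))).add ((hPlim 5).const_mul (-1 : ℝ)))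
    have hbig2 := by simpa only [mul_zero, add_zero, zero_add] using hbig
    exact hbig2
  have hVl6 : Tendsto V6 atTop (nhds 0) := by
    have hbig := ((((((((hPlim 0).const_mul (γ^6 : ℝ)).add ((hPlim 1).const_mul (6*γ^5 + 15*γ^4 + 20*γ^3 + 15*γ^2 + 6*γ + 1 : ℝ))).add ((hPlim 2).const_mul (15*γ^4 + 60*γ^3 + 105*γ^2 + 90*γ + 31 : ℝ))).add ((hPlim 3).const_mul (20*γ^3 + 90*γ^2 + 150*γ + 90 : ℝ))).add ((hPlim 4).const_mul (15*γ^2 + 60*γ + 65 : ℝ))).add ((hPlim 5).const_mul (6*γ + 15 : ℝ))).add (hPlim 6))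
    have hbig2 := by simpa only [mul_zero, add_zero, zero_add] using hbig
    exact hbig2


  -- G tends to 0 at +infinity
  have hA : Tendsto (fun s : ℝ => (V0 s) ^ q) atTop (nhds ((0:ℝ) ^ q)) := by
    have hcq : ContinuousAt (fun x : ℝ => x ^ q) 0 :=
      Real.continuousAt_rpow_const 0 q (Or.inr (le_of_lt hqpos))
    exact hcq.tendsto.comp hVl0
  rw [Real.zero_rpow (ne_of_gt hqpos)] at hA
  have hGlim : Tendsto G atTop (nhds 0) := by
    have hbig := ((((((((hVl3.mul hVl3).const_mul ((1:ℝ)/2)).add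
      ((hVl2.mul hVl2).const_mul (K4c n / 2))).add
      ((hVl1.mul hVl1).const_mul (K2c n / 2))).sub
      ((hVl0.mul hVl0).const_mul (K0c n / 2))).add (hVl5.mul hVl1)).sub
      (hVl4.mul hVl2)).sub (((hVl3.mul hVl1)).const_mul (K4c n))).add
      (hA.const_mul ((c - 6) * cQ n / (2 * c)))
    have hfun : ∀ s : ℝ, ((1:ℝ)/2) * (V3 s * V3 s) + K4c n / 2 * (V2 s * V2 s)
        + K2c n / 2 * (V1 s * V1 s) - K0c n / 2 * (V0 s * V0 s) + V5 s * V1 s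
        - V4 s * V2 s - K4c n * (V3 s * V1 s) + (c - 6) * cQ n / (2 * c) * (V0 s) ^ q
        = G s := by
      intro s
      rw [hGdef]
      ring
    have hbig2 := hbig.congr hfun
    simpa using hbig2
  -- conclude
  have hG0 : G t = 0 := by
    have h1 : Tendsto G atTop (nhds (G t)) := by
      apply Tendsto.congr' _ tendsto_const_nhds
      filter_upwards [eventually_ge_atTop (max t (-Real.log R + 1))] with y hy
      have hy1 : -Real.log R < y := by
        have := le_trans (le_max_right t (-Real.log R + 1)) hy
        linarith
      exact (hconst y hy1 (le_trans (le_max_left _ _) hy)).symm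
    exact tendsto_nhds_unique h1 hGlim
  rw [hHamG t ht, hG0]
end
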